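/- arXiv:2404.14939 — 8 statements merged into one kernel-verified Lean document; each statement's English description precedes it below -/
import Mathlib

section
/- Let (Ω,F,μ) be a measure space, X a dual Banach space whose closed unit ball is weak*-sequentially compact, p ∈ [1,∞), f ∈ L^p(Ω,μ;X), and A ∈ F with 0 < μ(A) < ∞. Then there exists a p-th mean of f in A, i.e., a point x ∈ X such that ∫_A ‖f(ω) - x‖^p dμ = inf_{y∈X} ∫_A ‖f(ω) - y‖^p dμ. -/
open MeasureTheory Set Filter Topology
open scoped ENNReal

/-!
Minimizing `∫_A ‖f - x‖^p` amounts to minimizing `‖f - x‖_{L^p(A)}`. A minimizing sequence `xₙ`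
is bounded, because the triangle inequality bounds `‖xₙ‖ μ(A)^{1/p}` by `‖f - xₙ‖_p + ‖f‖_p`
(up to a constant if `p < 1`). By weak*-sequential compactness of balls some subsequence
converges weak* to a point `x₀`. The operator norm is weak*-sequentially lower semicontinuous,
so pointwise in `ω` we get `‖f ω - x₀‖ ≤ liminf ‖f ω - xₙ‖`, and Fatou's lemma turns this into
`‖f - x₀‖_p ≤ liminf ‖f - xₙ‖_p`, the infimum.
-/

theorem ENNReal.liminf_rpow {ι : Type*} {l : Filter ι} (u : ι → ℝ≥0∞) {q : ℝ} (hq : 0 < q) :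
    liminf u l ^ q = liminf (fun i => u i ^ q) l :=
  (orderIsoRpow q hq).liminf_apply

theorem ContinuousLinearMap.opENorm_le_liminf_of_tendsto_apply {𝕜 𝕜₂ E F ι : Type*}
    [NontriviallyNormedField 𝕜] [NontriviallyNormedField 𝕜₂] [SeminormedAddCommGroup E]
    [SeminormedAddCommGroup F] [NormedSpace 𝕜 E] [NormedSpace 𝕜₂ F] {σ : 𝕜 →+* 𝕜₂}
    [RingHomIsometric σ] {l : Filter ι} [l.NeBot] {x : ι → E →SL[σ] F} {x₀ : E →SL[σ] F}
    (hx : ∀ v, Tendsto (fun i => x i v) l (𝓝 (x₀ v))) :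
    ‖x₀‖ₑ ≤ liminf (fun i => ‖x i‖ₑ) l :=
  x₀.opENorm_le_bound fun v => calc
    ‖x₀ v‖ₑ = liminf (fun i => ‖x i v‖ₑ) l := (hx v).enorm.liminf_eq.symm
    _ ≤ liminf (fun i => ‖x i‖ₑ * ‖v‖ₑ) l :=
      liminf_le_liminf (Eventually.of_forall fun i => (x i).le_opENorm v)
    _ = liminf (fun i => ‖x i‖ₑ) l * ‖v‖ₑ := by
      rw [ENNReal.liminf_mul_const_of_ne_top enorm_ne_top, mul_comm]

namespace MeasureTheory

variable {α E : Type*} {m : MeasurableSpace α} {μ : Measure α} [NormedAddCommGroup E]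
  {p : ℝ≥0∞}

theorem eLpNorm'_le_liminf_of_ae_enorm_le_liminf {q : ℝ} (hq : 0 < q) {f : ℕ → α → E}
    (hf : ∀ n, AEStronglyMeasurable (f n) μ) {g : α → E}
    (hg : ∀ᵐ ω ∂μ, ‖g ω‖ₑ ≤ liminf (fun n => ‖f n ω‖ₑ) atTop) :
    eLpNorm' g q μ ≤ liminf (fun n => eLpNorm' (f n) q μ) atTop := by
  rw [← ENNReal.rpow_le_rpow_iff hq]
  calc eLpNorm' g q μ ^ q = ∫⁻ ω, ‖g ω‖ₑ ^ q ∂μ := (lintegral_rpow_enorm_eq_rpow_eLpNorm' hq).symm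
    _ ≤ ∫⁻ ω, liminf (fun n => ‖f n ω‖ₑ ^ q) atTop ∂μ := lintegral_mono_ae <| hg.mono fun ω hω =>
      (ENNReal.rpow_le_rpow hω hq.le).trans_eq (ENNReal.liminf_rpow _ hq)
    _ ≤ liminf (fun n => ∫⁻ ω, ‖f n ω‖ₑ ^ q ∂μ) atTop :=
      lintegral_liminf_le' fun n => (hf n).enorm.pow_const q
    _ = liminf (fun n => eLpNorm' (f n) q μ) atTop ^ q := by
      simp_rw [lintegral_rpow_enorm_eq_rpow_eLpNorm' hq, ENNReal.liminf_rpow _ hq]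

theorem eLpNorm_le_liminf_of_ae_enorm_le_liminf {f : ℕ → α → E}
    (hf : ∀ n, AEStronglyMeasurable (f n) μ) {g : α → E}
    (hg : ∀ᵐ ω ∂μ, ‖g ω‖ₑ ≤ liminf (fun n => ‖f n ω‖ₑ) atTop) :
    eLpNorm g p μ ≤ liminf (fun n => eLpNorm (f n) p μ) atTop := by
  obtain rfl | hp0 := eq_or_ne p 0
  · simp
  obtain rfl | hp_top := eq_or_ne p ∞
  · simp only [eLpNorm_exponent_top, eLpNormEssSup]
    exact (essSup_mono_ae hg).trans (ENNReal.essSup_liminf_le _)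
  simp_rw [eLpNorm_eq_eLpNorm' hp0 hp_top]
  exact eLpNorm'_le_liminf_of_ae_enorm_le_liminf (ENNReal.toReal_pos hp0 hp_top) hf hg

theorem enorm_mul_measure_univ_rpow_le [NeZero μ] {f : α → E} (hf : AEStronglyMeasurable f μ)
    (hp : p ≠ 0) (x : E) :
    ‖x‖ₑ * μ univ ^ (1 / p.toReal) ≤
      p.LpAddConst * (eLpNorm (fun ω => f ω - x) p μ + eLpNorm f p μ) := by
  rw [← eLpNorm_const x hp (NeZero.ne μ), add_comm]
  calc eLpNorm (fun _ => x) p μ = eLpNorm (f - fun ω => f ω - x) p μ := by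
        congr 1; ext ω; simp
    _ ≤ _ := eLpNorm_sub_le' hf (hf.sub aestronglyMeasurable_const) p

theorem MemLp.exists_norm_le_of_eLpNorm_sub_const_le [IsFiniteMeasure μ] [NeZero μ]
    {f : α → E} (hf : MemLp f p μ) (hp : p ≠ 0) {c : ℝ≥0∞} (hc : c ≠ ∞) :
    ∃ R : ℝ, ∀ x, eLpNorm (fun ω => f ω - x) p μ ≤ c → ‖x‖ ≤ R := by
  have hμ0 : μ univ ^ (1 / p.toReal) ≠ 0 := by simp [NeZero.ne μ]
  have hμ_top : μ univ ^ (1 / p.toReal) ≠ ∞ := by simp [measure_ne_top μ univ]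
  refine ⟨(p.LpAddConst * (c + eLpNorm f p μ) / μ univ ^ (1 / p.toReal)).toReal,
    fun x hx => ?_⟩
  rw [← toReal_enorm]
  refine ENNReal.toReal_mono ?_ ?_
  · exact ENNReal.div_ne_top (ENNReal.mul_ne_top (ENNReal.LpAddConst_lt_top p).ne
      (ENNReal.add_ne_top.2 ⟨hc, hf.eLpNorm_ne_top⟩)) hμ0
  rw [ENNReal.le_div_iff_mul_le (Or.inl hμ0) (Or.inl hμ_top)]
  calc ‖x‖ₑ * μ univ ^ (1 / p.toReal)
      ≤ p.LpAddConst * (eLpNorm (fun ω => f ω - x) p μ + eLpNorm f p μ) :=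
        enorm_mul_measure_univ_rpow_le hf.1 hp x
    _ ≤ p.LpAddConst * (c + eLpNorm f p μ) := by gcongr

theorem integral_norm_rpow_eq_toReal_eLpNorm_rpow {q : ℝ} (hq : 0 < q) {f : α → E}
    (hf : AEStronglyMeasurable f μ) :
    ∫ ω, ‖f ω‖ ^ q ∂μ = (eLpNorm f (ENNReal.ofReal q) μ).toReal ^ q := by
  rw [toReal_eLpNorm hf, lpNorm_eq_integral_norm_rpow_toReal (by simpa using hq)
    ENNReal.ofReal_ne_top hf, ENNReal.toReal_ofReal hq.le,
    Real.rpow_inv_rpow (integral_nonneg fun _ => by positivity) hq.ne']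

end MeasureTheory

def WeakStarSeqCompactUnitBall (𝕜 E : Type*) [NontriviallyNormedField 𝕜]
    [SeminormedAddCommGroup E] [NormedSpace 𝕜 E] : Prop :=
  ∀ x : ℕ → StrongDual 𝕜 E, (∀ n, ‖x n‖ ≤ 1) →
    ∃ φ : ℕ → ℕ, StrictMono φ ∧ ∃ x₀ : StrongDual 𝕜 E,
      ∀ y : E, Tendsto (fun n => x (φ n) y) atTop (𝓝 (x₀ y))

namespace WeakStarSeqCompactUnitBall

section SeminormedAddCommGroup

variable {𝕜 E : Type*} [NontriviallyNormedField 𝕜] [SeminormedAddCommGroup E] [NormedSpace 𝕜 E]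

theorem exists_subseq_tendsto (h : WeakStarSeqCompactUnitBall 𝕜 E) {x : ℕ → StrongDual 𝕜 E}
    {R : ℝ} (hR : ∀ n, ‖x n‖ ≤ R) :
    ∃ φ : ℕ → ℕ, StrictMono φ ∧ ∃ x₀ : StrongDual 𝕜 E,
      ∀ y : E, Tendsto (fun n => x (φ n) y) atTop (𝓝 (x₀ y)) := by
  obtain ⟨c, hc⟩ := NormedField.exists_lt_norm 𝕜 R
  have hc0 : c ≠ 0 := norm_pos_iff.1 ((norm_nonneg _).trans_lt ((hR 0).trans_lt hc))
  obtain ⟨φ, hφ, z₀, hz₀⟩ := h (fun n => c⁻¹ • x n) fun n => by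
    rw [norm_smul, norm_inv, inv_mul_le_one₀ (norm_pos_iff.2 hc0)]
    exact (hR n).trans hc.le
  refine ⟨φ, hφ, c • z₀, fun y => ?_⟩
  simpa [smul_eq_mul, mul_inv_cancel_left₀ hc0] using (hz₀ y).const_mul c

theorem exists_forall_le (h : WeakStarSeqCompactUnitBall 𝕜 E) {Φ : StrongDual 𝕜 E → ℝ≥0∞}
    (hΦ_bdd : ∀ c ≠ ∞, ∃ R : ℝ, ∀ x, Φ x ≤ c → ‖x‖ ≤ R)
    (hΦ_lsc : ∀ (x : ℕ → StrongDual 𝕜 E) (x₀ : StrongDual 𝕜 E),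
      (∀ y, Tendsto (fun n => x n y) atTop (𝓝 (x₀ y))) → Φ x₀ ≤ liminf (fun n => Φ (x n)) atTop) :
    ∃ x₀, ∀ y, Φ x₀ ≤ Φ y := by
  set I := ⨅ y, Φ y
  obtain hI | hI := eq_or_ne I ∞
  · exact ⟨0, fun y => by rw [iInf_eq_top.1 hI y, iInf_eq_top.1 hI 0]⟩
  have hε : Tendsto (fun n : ℕ => ((n + 1 : ℕ) : ℝ≥0∞)⁻¹) atTop (𝓝 0) :=
    ENNReal.tendsto_inv_nat_nhds_zero.comp (tendsto_add_atTop_nat 1)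
  have hx : ∀ n : ℕ, ∃ x, Φ x < I + ((n + 1 : ℕ) : ℝ≥0∞)⁻¹ := fun n =>
    iInf_lt_iff.1 (ENNReal.lt_add_right hI (ENNReal.inv_ne_zero.2 (ENNReal.natCast_ne_top _)))
  choose x hx using hx
  have hxI : Tendsto (fun n => Φ (x n)) atTop (𝓝 I) := by
    refine tendsto_of_tendsto_of_tendsto_of_le_of_le tendsto_const_nhds ?_
      (fun n => iInf_le _ _) fun n => (hx n).le
    simpa using tendsto_const_nhds.add hε
  obtain ⟨R, hR⟩ := hΦ_bdd (I + 1) (by finiteness)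
  obtain ⟨φ, hφ, x₀, hx₀⟩ := h.exists_subseq_tendsto fun n => hR (x n) <|
    (hx n).le.trans (by gcongr; exact ENNReal.inv_le_one.2 (by exact_mod_cast n.succ_pos))
  refine ⟨x₀, fun y => ?_⟩
  calc Φ x₀ ≤ liminf (fun n => Φ (x (φ n))) atTop := hΦ_lsc _ _ hx₀
    _ = I := (hxI.comp hφ.tendsto_atTop).liminf_eq
    _ ≤ Φ y := iInf_le _ y

end SeminormedAddCommGroup

theorem exists_forall_eLpNorm_sub_const_le {𝕜 E : Type*} [NontriviallyNormedField 𝕜]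
    [NormedAddCommGroup E] [NormedSpace 𝕜 E] (h : WeakStarSeqCompactUnitBall 𝕜 E) {α : Type*}
    {m : MeasurableSpace α} {μ : Measure α} [IsFiniteMeasure μ] [NeZero μ] {p : ℝ≥0∞}
    {f : α → StrongDual 𝕜 E} (hf : MemLp f p μ) (hp : p ≠ 0) :
    ∃ x₀, ∀ y, eLpNorm (fun ω => f ω - x₀) p μ ≤ eLpNorm (fun ω => f ω - y) p μ := by
  refine h.exists_forall_le (Φ := fun x => eLpNorm (fun ω => f ω - x) p μ)
    (fun _ hc => hf.exists_norm_le_of_eLpNorm_sub_const_le hp hc) fun x x₀ hx => ?_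
  refine eLpNorm_le_liminf_of_ae_enorm_le_liminf
    (fun n => hf.1.sub aestronglyMeasurable_const) (ae_of_all _ fun ω => ?_)
  exact ContinuousLinearMap.opENorm_le_liminf_of_tendsto_apply fun v =>
    tendsto_const_nhds.sub (hx v)

end WeakStarSeqCompactUnitBall

theorem exists_p_mean_of_dual_wstar_seq_compact_general
    {Ω Y : Type*} [MeasurableSpace Ω] [NormedAddCommGroup Y] [NormedSpace ℝ Y]
    (μ : Measure Ω) (p : ℝ) (hp : 1 ≤ p)
    -- the unit ball of X = Y* is weak*-sequentially compact
    (hwsc : ∀ x : ℕ → (Y →L[ℝ] ℝ), (∀ n, ‖x n‖ ≤ 1) →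
      ∃ φ : ℕ → ℕ, StrictMono φ ∧ ∃ x₀ : Y →L[ℝ] ℝ,
        ∀ y : Y, Tendsto (fun n => x (φ n) y) atTop (𝓝 (x₀ y)))
    (f : Ω → (Y →L[ℝ] ℝ)) (hf : MemLp f (ENNReal.ofReal p) μ)
    (A : Set Ω) (hApos : 0 < μ A) (hAfin : μ A < ⊤) :
    ∃ x : Y →L[ℝ] ℝ, ∀ y : Y →L[ℝ] ℝ,
      (∫ ω in A, ‖f ω - x‖ ^ p ∂μ) ≤ ∫ ω in A, ‖f ω - y‖ ^ p ∂μ := by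
  have hp0 : 0 < p := zero_lt_one.trans_le hp
  have : IsFiniteMeasure (μ.restrict A) := isFiniteMeasure_restrict.2 hAfin.ne
  have : NeZero (μ.restrict A) := ⟨by simpa [Measure.restrict_eq_zero] using hApos.ne'⟩
  have hfA : MemLp f (ENNReal.ofReal p) (μ.restrict A) := hf.restrict A
  obtain ⟨x, hx⟩ := WeakStarSeqCompactUnitBall.exists_forall_eLpNorm_sub_const_le hwsc hfA
    (by simpa using hp0)
  have hsub : ∀ y, MemLp (fun ω => f ω - y) (ENNReal.ofReal p) (μ.restrict A) := fun y =>
    hfA.sub (memLp_const y)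
  refine ⟨x, fun y => ?_⟩
  rw [integral_norm_rpow_eq_toReal_eLpNorm_rpow hp0 (hsub x).1,
    integral_norm_rpow_eq_toReal_eLpNorm_rpow hp0 (hsub y).1]
  exact Real.rpow_le_rpow ENNReal.toReal_nonneg
    (ENNReal.toReal_mono (hsub y).eLpNorm_ne_top (hx y)) hp0.le

theorem exists_p_mean_of_dual_wstar_seq_compact
    {Ω Y : Type*} [MeasurableSpace Ω] [NormedAddCommGroup Y] [NormedSpace ℝ Y]
    [CompleteSpace Y] (μ : Measure Ω) (p : ℝ) (hp : 1 ≤ p)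
    -- the unit ball of X = Y* is weak*-sequentially compact
    (hwsc : ∀ x : ℕ → (Y →L[ℝ] ℝ), (∀ n, ‖x n‖ ≤ 1) →
      ∃ φ : ℕ → ℕ, StrictMono φ ∧ ∃ x₀ : Y →L[ℝ] ℝ,
        ∀ y : Y, Tendsto (fun n => x (φ n) y) atTop (𝓝 (x₀ y)))
    (f : Ω → (Y →L[ℝ] ℝ)) (hf : MemLp f (ENNReal.ofReal p) μ)
    (A : Set Ω) (hA : MeasurableSet A) (hApos : 0 < μ A) (hAfin : μ A < ⊤) :
    ∃ x : Y →L[ℝ] ℝ, ∀ y : Y →L[ℝ] ℝ,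
      (∫ ω in A, ‖f ω - x‖ ^ p ∂μ) ≤ ∫ ω in A, ‖f ω - y‖ ^ p ∂μ :=
  exists_p_mean_of_dual_wstar_seq_compact_general μ p hp hwsc f hf A hApos hAfin
end

section
/- Let (Ω,F,μ) be a measure space, X a Banach space whose norm is strictly convex, p ∈ (1,∞), f ∈ L^p(Ω,μ;X), and A ∈ F with 0 < μ(A) < ∞. Then there is at most one p-th mean of f in A: if x and y both minimize z ↦ ∫_A ‖f(ω) - z‖^p dμ(ω) over X, then x = y. -/
/-!
In a strictly convex space `u ↦ ‖u‖ ^ p` is strictly convex for `p > 1`: along a segment between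
points of equal norm the norm itself drops strictly, and otherwise `t ↦ t ^ p` is strictly convex
on the norms. Integrating `ω ↦ ‖f ω - z‖ ^ p` over a set of positive finite measure preserves
strict convexity in `z`, and a strictly convex function has at most one minimizer.
-/

open MeasureTheory Set

theorem strictConvexOn_norm_rpow {X : Type*} [NormedAddCommGroup X] [NormedSpace ℝ X]
    [StrictConvexSpace ℝ X] {p : ℝ} (hp : 1 < p) :
    StrictConvexOn ℝ univ (fun u : X => ‖u‖ ^ p) := by
  refine ⟨convex_univ, fun u _ v _ huv a b ha hb hab => ?_⟩
  simp only [smul_eq_mul]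
  by_cases hnorm : ‖u‖ = ‖v‖
  · have hlt : ‖a • u + b • v‖ < ‖u‖ := norm_combo_lt_of_ne le_rfl hnorm.ge huv ha hb hab
    calc ‖a • u + b • v‖ ^ p < ‖u‖ ^ p := by gcongr
      _ = a * ‖u‖ ^ p + b * ‖v‖ ^ p := by rw [← hnorm, ← add_mul, hab, one_mul]
  · calc ‖a • u + b • v‖ ^ p ≤ (a * ‖u‖ + b * ‖v‖) ^ p := by
          gcongr
          exact (norm_add_le _ _).trans_eq <| by
            rw [norm_smul, norm_smul, Real.norm_of_nonneg ha.le, Real.norm_of_nonneg hb.le]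
      _ < a * ‖u‖ ^ p + b * ‖v‖ ^ p :=
          (strictConvexOn_rpow hp).2 (norm_nonneg u) (norm_nonneg v) hnorm ha hb hab

namespace MeasureTheory

variable {Ω : Type*} [MeasurableSpace Ω] {μ : Measure Ω}

theorem integral_lt_integral_of_ae_lt {f g : Ω → ℝ} (hμ : μ ≠ 0) (hf : Integrable f μ)
    (hg : Integrable g μ) (hlt : ∀ᵐ ω ∂μ, f ω < g ω) : ∫ ω, f ω ∂μ < ∫ ω, g ω ∂μ := by
  have hpos : 0 < ∫ ω, g ω - f ω ∂μ := by
    rw [integral_pos_iff_support_of_nonneg_ae (hlt.mono fun ω h => sub_nonneg.2 h.le) (hg.sub hf),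
      pos_iff_ne_zero]
    intro hnull
    have hfalse : ∀ᵐ ω ∂μ, False := by
      filter_upwards [hlt, measure_eq_zero_iff_ae_notMem.1 hnull] with ω hω hω'
      simp only [Function.mem_support, sub_ne_zero, not_not] at hω'
      exact hω.ne' hω'
    exact hμ (ae_eq_bot.1 (Filter.eventually_false_iff_eq_bot.1 hfalse))
  rwa [integral_sub hg hf, sub_pos] at hpos

variable {X : Type*} [NormedAddCommGroup X]

theorem MemLp.integrable_norm_sub_rpow [IsFiniteMeasure μ] {f : Ω → X} {p : ℝ} (hp : 0 ≤ p)
    (hf : MemLp f (ENNReal.ofReal p) μ) (z : X) : Integrable (fun ω => ‖f ω - z‖ ^ p) μ := by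
  simpa [ENNReal.toReal_ofReal hp] using (hf.sub (memLp_const z)).integrable_norm_rpow'

end MeasureTheory

theorem StrictConvexOn.integral_comp_sub {Ω X : Type*} [MeasurableSpace Ω] {μ : Measure Ω}
    [NormedAddCommGroup X] [NormedSpace ℝ X] {φ : X → ℝ} (hφ : StrictConvexOn ℝ univ φ)
    (hμ : μ ≠ 0) {f : Ω → X} (hint : ∀ z, Integrable (fun ω => φ (f ω - z)) μ) :
    StrictConvexOn ℝ univ (fun z => ∫ ω, φ (f ω - z) ∂μ) := by
  refine ⟨convex_univ, fun x _ y _ hxy a b ha hb hab => ?_⟩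
  simp only [smul_eq_mul]
  have hcombo : ∀ ω, f ω - (a • x + b • y) = a • (f ω - x) + b • (f ω - y) := fun ω => by
    rw [smul_sub, smul_sub, sub_add_sub_comm, ← add_smul, hab, one_smul]
  have hne : ∀ ω, f ω - x ≠ f ω - y := fun ω => by simpa using hxy
  calc ∫ ω, φ (f ω - (a • x + b • y)) ∂μ
      < ∫ ω, a * φ (f ω - x) + b * φ (f ω - y) ∂μ := by
        refine integral_lt_integral_of_ae_lt hμ (hint _)
          (((hint x).const_mul a).add ((hint y).const_mul b))
          (Filter.Eventually.of_forall fun ω => ?_)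
        rw [hcombo]
        exact hφ.2 trivial trivial (hne ω) ha hb hab
    _ = a * ∫ ω, φ (f ω - x) ∂μ + b * ∫ ω, φ (f ω - y) ∂μ := by
        rw [integral_add ((hint x).const_mul a) ((hint y).const_mul b), integral_const_mul,
          integral_const_mul]

theorem p_mean_unique_of_strictConvex_general
    {Ω X : Type*} [MeasurableSpace Ω] [NormedAddCommGroup X] [NormedSpace ℝ X]
    [StrictConvexSpace ℝ X]
    (μ : Measure Ω) (p : ℝ) (hp : 1 < p)
    (f : Ω → X) (hf : MemLp f (ENNReal.ofReal p) μ)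
    (A : Set Ω) (hApos : 0 < μ A) (hAfin : μ A < ⊤)
    (x y : X)
    (hx : ∀ z : X, (∫ ω in A, ‖f ω - x‖ ^ p ∂μ) ≤ ∫ ω in A, ‖f ω - z‖ ^ p ∂μ)
    (hy : ∀ z : X, (∫ ω in A, ‖f ω - y‖ ^ p ∂μ) ≤ ∫ ω in A, ‖f ω - z‖ ^ p ∂μ) :
    x = y := by
  have : IsFiniteMeasure (μ.restrict A) := isFiniteMeasure_restrict.2 hAfin.ne
  have hμA : μ.restrict A ≠ 0 := by simpa [Measure.restrict_eq_zero] using hApos.ne'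
  have hM : StrictConvexOn ℝ univ (fun z => ∫ ω in A, ‖f ω - z‖ ^ p ∂μ) :=
    (strictConvexOn_norm_rpow hp).integral_comp_sub hμA
      ((hf.restrict A).integrable_norm_sub_rpow (by linarith))
  exact hM.eq_of_isMinOn (isMinOn_univ_iff.2 hx) (isMinOn_univ_iff.2 hy) trivial trivial

theorem p_mean_unique_of_strictConvex
    {Ω X : Type*} [MeasurableSpace Ω] [NormedAddCommGroup X] [NormedSpace ℝ X]
    [CompleteSpace X] [StrictConvexSpace ℝ X]
    (μ : Measure Ω) (p : ℝ) (hp : 1 < p)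
    (f : Ω → X) (hf : MemLp f (ENNReal.ofReal p) μ)
    (A : Set Ω) (hA : MeasurableSet A) (hApos : 0 < μ A) (hAfin : μ A < ⊤)
    (x y : X)
    (hx : ∀ z : X, (∫ ω in A, ‖f ω - x‖ ^ p ∂μ) ≤ ∫ ω in A, ‖f ω - z‖ ^ p ∂μ)
    (hy : ∀ z : X, (∫ ω in A, ‖f ω - y‖ ^ p ∂μ) ≤ ∫ ω in A, ‖f ω - z‖ ^ p ∂μ) :
    x = y :=
  p_mean_unique_of_strictConvex_general μ p hp f hf A hApos hAfin x y hx hy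
end

section
/- Let (Ω,F,μ) be a measure space, X a Banach space with Gâteaux differentiable norm, p ∈ (1,∞), f ∈ L^p(Ω,μ;X), and A ∈ F with 0 < μ(A) < ∞. If x is a p-th mean of f in A, then for every v ∈ X the function R(a) = ∫_A ‖f(ω) - (x + a v)‖^p dμ(ω) is convex and differentiable, attains its minimum at a = 0, and R'(0) = ∫_A p ‖f(ω) - x‖^{p-1} ∂(‖f(ω) - x‖)(v) dμ(ω) = 0. -/
open MeasureTheory Set Filter Topology

/-!
Each integrand `a ↦ ‖f ω - (x + a • v)‖ ^ p` is convex, hence so is `R`. Each is differentiable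
everywhere: where `f ω - (x + a • v) ≠ 0` by Gâteaux differentiability of the norm and the chain
rule, and at a zero because there it is `|t - a| ^ p * ‖v‖ ^ p` with `p > 1`. Since the norm is
`‖v‖`-Lipschitz along the line, for `|t - a| < 1` the derivative is at most
`p * (‖f ω - x‖ + C) ^ (p - 1) * ‖v‖`, which is integrable because `μ A < ∞` embeds `Lᵖ` into
`Lᵖ⁻¹`; dominated convergence then differentiates under the integral. As `R` is minimal at `0`,
`R' 0 = 0`.
-/

def NormGateauxDifferentiable (X : Type*) [NormedAddCommGroup X] [NormedSpace ℝ X] : Prop :=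
  ∀ z : X, z ≠ 0 → ∀ v : X,
    ∃ d : ℝ, Tendsto (fun t : ℝ => (‖z + t • v‖ - ‖z‖) / t) (𝓝[≠] 0) (𝓝 d)

section NormedSpace

variable {X : Type*} [NormedAddCommGroup X] [NormedSpace ℝ X] {p : ℝ}

lemma lipschitzWith_norm_add_smul (z v : X) :
    LipschitzWith ‖v‖₊ (fun t : ℝ => ‖z + t • v‖) :=
  LipschitzWith.of_dist_le_mul fun s t => by
    calc dist ‖z + s • v‖ ‖z + t • v‖ ≤ ‖(z + s • v) - (z + t • v)‖ := dist_norm_norm_le _ _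
      _ = ‖v‖₊ * dist s t := by
        rw [add_sub_add_left_eq_sub, ← sub_smul, norm_smul, mul_comm, Real.dist_eq,
          coe_nnnorm, Real.norm_eq_abs]

lemma NormGateauxDifferentiable.exists_hasDerivAt_norm_add_smul
    (hX : NormGateauxDifferentiable X) (z v : X) :
    ∃ d : ℝ, |d| ≤ ‖v‖ ∧ (z ≠ 0 → HasDerivAt (fun t : ℝ => ‖z + t • v‖) d 0) := by
  by_cases hz : z = 0
  · exact ⟨0, by simp, fun h => absurd hz h⟩
  obtain ⟨d, hd⟩ := hX z hz v
  have hder : HasDerivAt (fun t : ℝ => ‖z + t • v‖) d 0 := by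
    rw [hasDerivAt_iff_tendsto_slope_zero]
    refine hd.congr fun t => ?_
    simp [div_eq_inv_mul]
  exact ⟨d, hder.le_of_lipschitz (lipschitzWith_norm_add_smul z v), fun _ => hder⟩

lemma hasDerivAt_norm_add_smul_rpow_zero (hp : 1 < p) {z v : X} {d : ℝ}
    (hd : z ≠ 0 → HasDerivAt (fun t : ℝ => ‖z + t • v‖) d 0) :
    HasDerivAt (fun t : ℝ => ‖z + t • v‖ ^ p) (p * ‖z‖ ^ (p - 1) * d) 0 := by
  by_cases hz : z = 0
  · subst hz
    have heq : (fun t : ℝ => ‖0 + t • v‖ ^ p) = fun t => |t| ^ p * ‖v‖ ^ p := by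
      ext t
      rw [zero_add, norm_smul, Real.norm_eq_abs, Real.mul_rpow (abs_nonneg t) (norm_nonneg v)]
    rw [heq, norm_zero, Real.zero_rpow (by linarith), mul_zero, zero_mul]
    simpa using (hasDerivAt_abs_rpow 0 hp).mul_const (‖v‖ ^ p)
  · convert (hd hz).rpow_const (p := p) (Or.inr hp.le) using 1
    simp only [zero_smul, add_zero]
    ring

lemma NormGateauxDifferentiable.exists_hasDerivAt_norm_add_smul_rpow
    (hX : NormGateauxDifferentiable X) (hp : 1 < p) (z v : X) (a : ℝ) :
    ∃ d : ℝ, HasDerivAt (fun t : ℝ => ‖z + t • v‖ ^ p) d a ∧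
      |d| ≤ p * ‖z + a • v‖ ^ (p - 1) * ‖v‖ := by
  obtain ⟨d, hdv, hd⟩ := hX.exists_hasDerivAt_norm_add_smul (z + a • v) v
  refine ⟨p * ‖z + a • v‖ ^ (p - 1) * d, ?_, ?_⟩
  · have h := HasDerivAt.comp_sub_const a a
      (by simpa using hasDerivAt_norm_add_smul_rpow_zero hp hd)
    simpa [add_assoc, ← add_smul] using h
  · rw [abs_mul, abs_of_nonneg (by positivity)]
    gcongr

lemma NormGateauxDifferentiable.differentiable_norm_add_smul_rpow
    (hX : NormGateauxDifferentiable X) (hp : 1 < p) (z v : X) :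
    Differentiable ℝ (fun t : ℝ => ‖z + t • v‖ ^ p) := fun a =>
  (hX.exists_hasDerivAt_norm_add_smul_rpow hp z v a).choose_spec.1.differentiableAt

lemma NormGateauxDifferentiable.abs_deriv_norm_add_smul_rpow_le
    (hX : NormGateauxDifferentiable X) (hp : 1 < p) (z v : X) (a : ℝ) :
    |deriv (fun t : ℝ => ‖z + t • v‖ ^ p) a| ≤ p * ‖z + a • v‖ ^ (p - 1) * ‖v‖ := by
  obtain ⟨d, hd, hdle⟩ := hX.exists_hasDerivAt_norm_add_smul_rpow hp z v a
  rwa [hd.deriv]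

lemma convexOn_norm_add_smul_rpow (hp : 1 ≤ p) (z v : X) :
    ConvexOn ℝ univ (fun t : ℝ => ‖z + t • v‖ ^ p) := by
  refine ⟨convex_univ, fun a _ b _ c d hc hd hcd => ?_⟩
  have hsplit : z + (c • a + d • b) • v = c • (z + a • v) + d • (z + b • v) := by
    linear_combination (norm := module) -hcd • z
  calc ‖z + (c • a + d • b) • v‖ ^ p
      ≤ (c * ‖z + a • v‖ + d * ‖z + b • v‖) ^ p := by
        gcongr
        rw [hsplit]
        refine (norm_add_le _ _).trans_eq ?_
        rw [norm_smul, norm_smul, Real.norm_of_nonneg hc, Real.norm_of_nonneg hd]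
    _ ≤ c • ‖z + a • v‖ ^ p + d • ‖z + b • v‖ ^ p :=
        (convexOn_rpow hp).2 (norm_nonneg _) (norm_nonneg _) hc hd hcd

end NormedSpace

section Integral

variable {Ω : Type*} [MeasurableSpace Ω] {μ : Measure Ω}

lemma aestronglyMeasurable_of_hasDerivAt {E : Type*} [NormedAddCommGroup E] [NormedSpace ℝ E]
    {F : ℝ → Ω → E} {F' : Ω → E} {a : ℝ} (hF : ∀ t, AEStronglyMeasurable (F t) μ)
    (hF' : ∀ᵐ ω ∂μ, HasDerivAt (F · ω) (F' ω) a) : AEStronglyMeasurable F' μ := by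
  have hseq : Tendsto (fun n : ℕ => (n : ℝ)⁻¹) atTop (𝓝[≠] 0) :=
    (tendsto_inv_atTop_nhdsGT_zero.comp tendsto_natCast_atTop_atTop).mono_right
      (nhdsWithin_mono _ fun _ h => ne_of_gt h)
  refine aestronglyMeasurable_of_tendsto_ae atTop
    (f := fun (n : ℕ) ω => ((n : ℝ)⁻¹)⁻¹ • (F (a + (n : ℝ)⁻¹) ω - F a ω))
    (fun n => ((hF _).sub (hF _)).const_smul _) ?_
  filter_upwards [hF'] with ω hω using hω.tendsto_slope_zero.comp hseq

lemma MeasureTheory.MemLp.integrable_norm_rpow_of_le [IsFiniteMeasure μ] {E : Type*}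
    [NormedAddCommGroup E] {g : Ω → E} {p q : ℝ} (hg : MemLp g (ENNReal.ofReal p) μ)
    (hq : 0 < q) (hqp : q ≤ p) :
    Integrable (fun ω => ‖g ω‖ ^ q) μ := by
  have h := (hg.mono_exponent (ENNReal.ofReal_le_ofReal hqp)).integrable_norm_rpow
    (by simpa using hq) ENNReal.ofReal_ne_top
  rwa [ENNReal.toReal_ofReal hq.le] at h

lemma convexOn_integral {E : Type*} [AddCommGroup E] [Module ℝ E] {s : Set E}
    {F : E → Ω → ℝ} (hs : Convex ℝ s) (hF : ∀ ω, ConvexOn ℝ s (F · ω))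
    (hF_int : ∀ x ∈ s, Integrable (F x) μ) : ConvexOn ℝ s (fun x => ∫ ω, F x ω ∂μ) := by
  refine ⟨hs, fun x hx y hy a b ha hb hab => ?_⟩
  have hxy_int := ((hF_int x hx).const_mul a).add ((hF_int y hy).const_mul b)
  calc ∫ ω, F (a • x + b • y) ω ∂μ ≤ ∫ ω, (a * F x ω + b * F y ω) ∂μ :=
        integral_mono (hF_int _ (hs hx hy ha hb hab)) hxy_int fun ω => (hF ω).2 hx hy ha hb hab
    _ = a • ∫ ω, F x ω ∂μ + b • ∫ ω, F y ω ∂μ := by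
        rw [integral_add ((hF_int x hx).const_mul a) ((hF_int y hy).const_mul b),
          integral_const_mul, integral_const_mul, smul_eq_mul, smul_eq_mul]

variable {X : Type*} [NormedAddCommGroup X] [NormedSpace ℝ X] {p : ℝ} [IsFiniteMeasure μ]
  {g : Ω → X}

lemma integrable_norm_add_smul_rpow (hp : 0 < p) (hg : MemLp g (ENNReal.ofReal p) μ)
    (v : X) (t : ℝ) : Integrable (fun ω => ‖g ω + t • v‖ ^ p) μ :=
  (hg.add (memLp_const (t • v))).integrable_norm_rpow_of_le hp le_rfl

lemma convexOn_integral_norm_add_smul_rpow (hp : 1 ≤ p) (hg : MemLp g (ENNReal.ofReal p) μ)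
    (v : X) : ConvexOn ℝ univ (fun t : ℝ => ∫ ω, ‖g ω + t • v‖ ^ p ∂μ) :=
  convexOn_integral convex_univ (fun ω => convexOn_norm_add_smul_rpow hp (g ω) v)
    fun t _ => integrable_norm_add_smul_rpow (by linarith) hg v t

lemma NormGateauxDifferentiable.hasDerivAt_integral_norm_add_smul_rpow
    (hX : NormGateauxDifferentiable X) (hp : 1 < p) (hg : MemLp g (ENNReal.ofReal p) μ)
    (v : X) (a : ℝ) :
    HasDerivAt (fun t : ℝ => ∫ ω, ‖g ω + t • v‖ ^ p ∂μ)
      (∫ ω, deriv (fun t : ℝ => ‖g ω + t • v‖ ^ p) a ∂μ) a := by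
  have hint := integrable_norm_add_smul_rpow (by linarith) hg v
  have hdiff : ∀ ω t, HasDerivAt (fun t : ℝ => ‖g ω + t • v‖ ^ p)
      (deriv (fun t : ℝ => ‖g ω + t • v‖ ^ p) t) t := fun ω t =>
    (hX.differentiable_norm_add_smul_rpow hp (g ω) v t).hasDerivAt
  set C := (|a| + 1) * ‖v‖ with hC
  have hbound : ∀ ω, ∀ t ∈ Metric.ball a 1,
      ‖deriv (fun t : ℝ => ‖g ω + t • v‖ ^ p) t‖ ≤ p * (‖g ω‖ + C) ^ (p - 1) * ‖v‖ := by
    intro ω t ht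
    have ht' : |t| ≤ |a| + 1 := by
      have := abs_sub_abs_le_abs_sub t a
      rw [Metric.mem_ball, Real.dist_eq] at ht
      linarith
    have hnorm : ‖g ω + t • v‖ ≤ ‖g ω‖ + C := by
      refine (norm_add_le _ _).trans ?_
      rw [norm_smul, Real.norm_eq_abs, hC]
      gcongr
    refine (hX.abs_deriv_norm_add_smul_rpow_le hp (g ω) v t).trans ?_
    gcongr
  have hbound_int : Integrable (fun ω => p * (‖g ω‖ + C) ^ (p - 1) * ‖v‖) μ := by
    have h := (hg.norm.add (memLp_const C)).integrable_norm_rpow_of_le (sub_pos.2 hp)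
      (by linarith)
    refine ((h.const_mul p).mul_const ‖v‖).congr (ae_of_all _ fun ω => ?_)
    simp only [Pi.add_apply, Real.norm_of_nonneg (by positivity : 0 ≤ ‖g ω‖ + C)]
  exact (hasDerivAt_integral_of_dominated_loc_of_deriv_le (Metric.ball_mem_nhds a one_pos)
    (Eventually.of_forall fun t => (hint t).1) (hint a)
    (aestronglyMeasurable_of_hasDerivAt (fun t => (hint t).1) (ae_of_all _ fun ω => hdiff ω a))
    (ae_of_all _ hbound) hbound_int (ae_of_all _ fun ω t _ => hdiff ω t)).2

end Integral

theorem p_mean_first_order_condition_general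
    {Ω X : Type*} [MeasurableSpace Ω] [NormedAddCommGroup X] [NormedSpace ℝ X]
    (μ : Measure Ω) (p : ℝ) (hp : 1 < p)
    -- the norm of X is Gâteaux differentiable away from 0
    (hG : ∀ z : X, z ≠ 0 → ∀ v : X,
      ∃ d : ℝ, Tendsto (fun t : ℝ => (‖z + t • v‖ - ‖z‖) / t) (𝓝[≠] 0) (𝓝 d))
    (f : Ω → X) (hf : MemLp f (ENNReal.ofReal p) μ)
    (A : Set Ω) (hAfin : μ A < ⊤)
    (x : X)
    -- x is a p-th mean of f in A
    (hx : ∀ z : X, (∫ ω in A, ‖f ω - x‖ ^ p ∂μ) ≤ ∫ ω in A, ‖f ω - z‖ ^ p ∂μ)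
    (v : X) (D : Ω → ℝ)
    -- D ω is the Gâteaux derivative of the norm at f ω - x in the direction of the
    -- curve a ↦ f ω - (x + a v)
    (hD : ∀ ω : Ω, f ω ≠ x →
      HasDerivAt (fun a : ℝ => ‖f ω - (x + a • v)‖) (D ω) 0) :
    let R : ℝ → ℝ := fun a => ∫ ω in A, ‖f ω - (x + a • v)‖ ^ p ∂μ
    ConvexOn ℝ Set.univ R ∧ (∀ a : ℝ, ∃ d : ℝ, HasDerivAt R d a) ∧
    (∀ a : ℝ, R 0 ≤ R a) ∧
    HasDerivAt R (∫ ω in A, p * ‖f ω - x‖ ^ (p - 1) * D ω ∂μ) 0 ∧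
    (∫ ω in A, p * ‖f ω - x‖ ^ (p - 1) * D ω ∂μ) = 0 := by
  intro R
  have : IsFiniteMeasure (μ.restrict A) := isFiniteMeasure_restrict.2 hAfin.ne
  have hg : MemLp (fun ω => f ω - x) (ENNReal.ofReal p) (μ.restrict A) :=
    (hf.restrict A).sub (memLp_const x)
  have hR : R = fun a => ∫ ω in A, ‖(f ω - x) + a • (-v)‖ ^ p ∂μ := by
    simp only [R, smul_neg, ← sub_eq_add_neg, sub_sub]
  have hderiv := NormGateauxDifferentiable.hasDerivAt_integral_norm_add_smul_rpow hG hp hg (-v)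
  have hderiv_zero : ∀ ω, deriv (fun t : ℝ => ‖(f ω - x) + t • (-v)‖ ^ p) 0
      = p * ‖f ω - x‖ ^ (p - 1) * D ω := fun ω =>
    (hasDerivAt_norm_add_smul_rpow_zero hp fun h => by
      simpa [smul_neg, ← sub_eq_add_neg, sub_sub] using hD ω (sub_ne_zero.1 h)).deriv
  have hR0 : HasDerivAt R (∫ ω in A, p * ‖f ω - x‖ ^ (p - 1) * D ω ∂μ) 0 := by
    simpa only [hR, hderiv_zero] using hderiv 0
  have hmin : ∀ a, R 0 ≤ R a := fun a => by simpa [R] using hx (x + a • v)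
  refine ⟨hR ▸ convexOn_integral_norm_add_smul_rpow hp.le hg (-v),
    fun a => ⟨_, hR ▸ hderiv a⟩, hmin, hR0,
    IsLocalMin.hasDerivAt_eq_zero (Eventually.of_forall hmin) hR0⟩

theorem p_mean_first_order_condition
    {Ω X : Type*} [MeasurableSpace Ω] [NormedAddCommGroup X] [NormedSpace ℝ X]
    [CompleteSpace X]
    (μ : Measure Ω) (p : ℝ) (hp : 1 < p)
    -- the norm of X is Gâteaux differentiable away from 0
    (hG : ∀ z : X, z ≠ 0 → ∀ v : X,
      ∃ d : ℝ, Tendsto (fun t : ℝ => (‖z + t • v‖ - ‖z‖) / t) (𝓝[≠] 0) (𝓝 d))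
    (f : Ω → X) (hf : MemLp f (ENNReal.ofReal p) μ)
    (A : Set Ω) (hA : MeasurableSet A) (hApos : 0 < μ A) (hAfin : μ A < ⊤)
    (x : X)
    -- x is a p-th mean of f in A
    (hx : ∀ z : X, (∫ ω in A, ‖f ω - x‖ ^ p ∂μ) ≤ ∫ ω in A, ‖f ω - z‖ ^ p ∂μ)
    (v : X) (D : Ω → ℝ)
    -- D ω is the Gâteaux derivative of the norm at f ω - x in the direction of the
    -- curve a ↦ f ω - (x + a v)
    (hD : ∀ ω : Ω, f ω ≠ x →
      HasDerivAt (fun a : ℝ => ‖f ω - (x + a • v)‖) (D ω) 0) :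
    let R : ℝ → ℝ := fun a => ∫ ω in A, ‖f ω - (x + a • v)‖ ^ p ∂μ
    ConvexOn ℝ Set.univ R ∧ (∀ a : ℝ, ∃ d : ℝ, HasDerivAt R d a) ∧
    (∀ a : ℝ, R 0 ≤ R a) ∧
    HasDerivAt R (∫ ω in A, p * ‖f ω - x‖ ^ (p - 1) * D ω ∂μ) 0 ∧
    (∫ ω in A, p * ‖f ω - x‖ ^ (p - 1) * D ω ∂μ) = 0 :=
  p_mean_first_order_condition_general μ p hp hG f hf A hAfin x hx v D hD
end

section
/- Let (Ω,F,μ) be a measure space, X a Banach space, p ∈ [1,∞), k ≥ 1, and f ∈ L^p(Ω,μ;X). Let G_{p,k}(X) denote the set of simple functions in L^p taking at most k values on a measurable partition of Ω. If (h_n) ⊂ G_{p,k}(X) is a minimizing sequence for f (i.e., ‖f - h_n‖_p → inf_{g∈G_{p,k}} ‖f - g‖_p), then there exist a uniformly bounded sequence (g_n) ⊂ G_{p,k}(X) and a subsequence (h'_n) of (h_n) with ‖g_n - h'_n‖_p → 0; in particular (g_n) is also a minimizing sequence for f. -/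
/-!
A combinatorial extraction gives a level `M` and a subsequence `h (φ j)` all of whose values of
norm `> M` have norm `> j`. Setting `h (φ j)` to zero on `S j = {M < ‖h (φ j)‖}` produces `g j`,
still in `G_{p,k}` and bounded by `M`. Since `(h n)` is bounded in `L^p`, Chebyshev gives
`μ (S j) → 0`. Splitting `‖·‖_p^p` over `S j` and its complement, the optimality of
`m = inf ‖f - g‖_p` tested against `g j` yields
`∫_{S j} ‖f - h (φ j)‖^p ≤ ‖f - h (φ j)‖_p^p + ∫_{S j} ‖f‖^p - m^p → 0`,
so `g j - h (φ j) = -(S j).indicator (h (φ j))` tends to zero in `L^p`.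
-/

open MeasureTheory Set Filter Topology
open scoped ENNReal

/-- The set of simple functions in `L^p` taking at most `k` values. -/
def GSet {Ω X : Type*} [MeasurableSpace Ω] [NormedAddCommGroup X]
    (μ : MeasureTheory.Measure Ω) (p : ENNReal) (k : ℕ) : Set (Ω → X) :=
  {g | MeasureTheory.MemLp g p μ ∧ MeasureTheory.StronglyMeasurable g ∧
    ∃ s : Finset X, s.card ≤ k ∧ ∀ ω, g ω ∈ s}

-- Either all values eventually exceed every level, or along a subsequence one value `y n`
-- stays below a level `C`; then erase `y n` and induct on the cardinality bound.
theorem exists_strictMono_gt_of_gt_of_card_le {k : ℕ} (V : ℕ → Finset ℝ)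
    (hV : ∀ n, (V n).card ≤ k) :
    ∃ (M : ℕ) (φ : ℕ → ℕ), StrictMono φ ∧ ∀ j, ∀ x ∈ V (φ j), (M : ℝ) < x → (j : ℝ) < x := by
  induction k generalizing V with
  | zero =>
    refine ⟨0, id, strictMono_id, fun j x hx => ?_⟩
    simp [Finset.card_eq_zero.mp (Nat.le_zero.mp (hV j))] at hx
  | succ k ih =>
    by_cases hlarge : ∀ j : ℕ, ∀ᶠ n in atTop, ∀ x ∈ V n, (j : ℝ) < x
    · obtain ⟨φ, hφ, hφV⟩ := extraction_forall_of_eventually hlarge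
      exact ⟨0, φ, hφ, fun j x hx _ => hφV j x hx⟩
    push Not at hlarge
    obtain ⟨C, hC⟩ := hlarge
    obtain ⟨ψ, hψ, hψV⟩ := extraction_of_frequently_atTop hC
    choose y hyV hyC using hψV
    obtain ⟨M, φ, hφ, hφV⟩ := ih (fun n => (V (ψ n)).erase (y n))
      fun n => by have := hV (ψ n); rw [Finset.card_erase_of_mem (hyV n)]; omega
    refine ⟨max C M, ψ ∘ φ, hψ.comp hφ, fun j x hx hMx => ?_⟩
    have hCx : (C : ℝ) < x := lt_of_le_of_lt (Nat.cast_le.mpr (le_max_left C M)) hMx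
    have hMx' : (M : ℝ) < x := lt_of_le_of_lt (Nat.cast_le.mpr (le_max_right C M)) hMx
    have hxy : x ≠ y (φ j) := fun hxy => (hyC (φ j)).not_gt (hxy ▸ hCx)
    exact hφV j x (Finset.mem_erase.mpr ⟨hxy, hx⟩) hMx'

theorem ENNReal.tendsto_zero_and_tendsto_of_le_add {ι : Type*} {l : Filter ι}
    {a b c : ι → ℝ≥0∞} {m : ℝ≥0∞} (hm : m ≠ ∞) (hab : Tendsto (fun i => a i + b i) l (𝓝 m))
    (hc : Tendsto c l (𝓝 0)) (hle : ∀ i, m ≤ c i + b i) :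
    Tendsto a l (𝓝 0) ∧ Tendsto (fun i => c i + b i) l (𝓝 m) := by
  have habc : Tendsto (fun i => a i + b i + c i) l (𝓝 m) := by simpa using hab.add hc
  constructor
  · have hsub : Tendsto (fun i => a i + b i + c i - m) l (𝓝 0) := by
      simpa using ENNReal.Tendsto.sub habc tendsto_const_nhds (Or.inr hm)
    refine tendsto_of_tendsto_of_tendsto_of_le_of_le tendsto_const_nhds hsub (fun _ => zero_le)
      fun i => ENNReal.le_sub_of_add_le_right hm ?_
    calc a i + m ≤ a i + (c i + b i) := by gcongr; exact hle i
      _ = a i + b i + c i := by ring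
  · refine tendsto_of_tendsto_of_tendsto_of_le_of_le tendsto_const_nhds habc hle fun i => ?_
    rw [add_comm (c i)]
    gcongr
    exact le_add_self

theorem ENNReal.tendsto_of_tendsto_rpow {ι : Type*} {l : Filter ι} {x : ι → ℝ≥0∞} {y : ℝ≥0∞}
    {q : ℝ} (hq : 0 < q) (h : Tendsto (fun i => x i ^ q) l (𝓝 (y ^ q))) : Tendsto x l (𝓝 y) := by
  simpa [ENNReal.rpow_rpow_inv hq.ne', Function.comp_def] using
    ((ENNReal.continuous_rpow_const (y := q⁻¹)).tendsto _).comp h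

theorem norm_indicator_compl_norm_gt_le {α X : Type*} [NormedAddCommGroup X] {M : ℝ}
    (hM : 0 ≤ M) (u : α → X) (ω : α) :
    ‖{ω | M < ‖u ω‖}ᶜ.indicator u ω‖ ≤ M := by
  by_cases hω : M < ‖u ω‖ <;> simp_all

section

variable {Ω X : Type*} [MeasurableSpace Ω] [NormedAddCommGroup X] {μ : Measure Ω} {p : ℝ≥0∞}

theorem indicator_compl_norm_gt_mem_GSet {k : ℕ} {g : Ω → X} (hg : g ∈ GSet μ p k) (M : ℝ) :
    {ω | M < ‖g ω‖}ᶜ.indicator g ∈ GSet μ p k := by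
  classical
  obtain ⟨hLp, hsm, s, hs, hgs⟩ := hg
  have hS : MeasurableSet {ω | M < ‖g ω‖} := measurableSet_lt measurable_const hsm.norm.measurable
  refine ⟨hLp.indicator hS.compl, hsm.indicator hS.compl,
    s.image fun x => if M < ‖x‖ then 0 else x, Finset.card_image_le.trans hs, fun ω => ?_⟩
  exact Finset.mem_image.mpr ⟨g ω, hgs ω, by by_cases hω : M < ‖g ω‖ <;> simp [hω]⟩

theorem eLpNorm_rpow_eq_indicator_add_indicator_compl (hp0 : p ≠ 0) (hp : p ≠ ∞)
    {S : Set Ω} (hS : MeasurableSet S) (u : Ω → X) :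
    eLpNorm u p μ ^ p.toReal =
      eLpNorm (S.indicator u) p μ ^ p.toReal + eLpNorm (Sᶜ.indicator u) p μ ^ p.toReal := by
  have hq : 0 < p.toReal := ENNReal.toReal_pos hp0 hp
  simp only [eLpNorm_indicator_eq_eLpNorm_restrict hS,
    eLpNorm_indicator_eq_eLpNorm_restrict hS.compl, eLpNorm_eq_eLpNorm' hp0 hp,
    ← lintegral_rpow_enorm_eq_rpow_eLpNorm' hq]
  exact (lintegral_add_compl _ hS).symm

theorem exists_ne_top_eventually_eLpNorm_le {ι : Type*} {l : Filter ι} {f : Ω → X}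
    (hf : MemLp f p μ) {h : ι → Ω → X} (hh : ∀ i, AEStronglyMeasurable (h i) μ) {m : ℝ≥0∞}
    (hm : m ≠ ∞) (hlim : Tendsto (fun i => eLpNorm (f - h i) p μ) l (𝓝 m)) :
    ∃ C ≠ ∞, ∀ᶠ i in l, eLpNorm (h i) p μ ≤ C := by
  refine ⟨ENNReal.LpAddConst p * (eLpNorm f p μ + (m + 1)),
    ENNReal.mul_ne_top (ENNReal.LpAddConst_lt_top p).ne (by finiteness [hf.eLpNorm_lt_top.ne]), ?_⟩
  filter_upwards [hlim.eventually_le_const (ENNReal.lt_add_right hm one_ne_zero)] with i hi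
  calc eLpNorm (h i) p μ = eLpNorm (f - (f - h i)) p μ := by rw [sub_sub_cancel]
    _ ≤ ENNReal.LpAddConst p * (eLpNorm f p μ + eLpNorm (f - h i) p μ) :=
      eLpNorm_sub_le' hf.1 (hf.1.sub (hh i)) p
    _ ≤ ENNReal.LpAddConst p * (eLpNorm f p μ + (m + 1)) := by gcongr

theorem tendsto_measure_le_norm_of_eventually_eLpNorm_le (hp0 : p ≠ 0) (hp : p ≠ ∞)
    {ι : Type*} {l : Filter ι} {u : ι → Ω → X} (hu : ∀ i, AEStronglyMeasurable (u i) μ)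
    {C : ℝ≥0∞} (hC : C ≠ ∞) (hbound : ∀ᶠ i in l, eLpNorm (u i) p μ ≤ C)
    {r : ι → ℝ} (hr : Tendsto r l atTop) :
    Tendsto (fun i => μ {ω | r i ≤ ‖u i ω‖}) l (𝓝 0) := by
  have hq : 0 < p.toReal := ENNReal.toReal_pos hp0 hp
  have hr' : Tendsto (fun i => ENNReal.ofReal (r i)) l (𝓝 ∞) := ENNReal.tendsto_ofReal_atTop.comp hr
  have hlim : Tendsto (fun i => (ENNReal.ofReal (r i))⁻¹ ^ p.toReal * C ^ p.toReal) l (𝓝 0) := by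
    have hinv : Tendsto (fun i => (ENNReal.ofReal (r i))⁻¹ ^ p.toReal) l (𝓝 0) := by
      have := (ENNReal.continuous_rpow_const (y := p.toReal)).tendsto 0
      simpa [ENNReal.zero_rpow_of_pos hq, Function.comp_def] using
        this.comp (ENNReal.inv_top ▸ hr'.inv)
    simpa using ENNReal.Tendsto.mul_const hinv (Or.inr (ENNReal.rpow_ne_top_of_nonneg hq.le hC))
  refine tendsto_of_tendsto_of_tendsto_of_le_of_le' tendsto_const_nhds hlim
    (Eventually.of_forall fun _ => zero_le) ?_
  filter_upwards [hbound, hr'.eventually_ne ENNReal.zero_ne_top.symm] with i hi hr0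
  calc μ {ω | r i ≤ ‖u i ω‖} = μ {ω | ENNReal.ofReal (r i) ≤ ‖u i ω‖ₑ} := by
        simp only [← ofReal_norm, ENNReal.ofReal_le_ofReal_iff (norm_nonneg _)]
    _ ≤ (ENNReal.ofReal (r i))⁻¹ ^ p.toReal * eLpNorm (u i) p μ ^ p.toReal :=
        meas_ge_le_mul_pow_eLpNorm_enorm μ hp0 hp (hu i) hr0 (by simp)
    _ ≤ (ENNReal.ofReal (r i))⁻¹ ^ p.toReal * C ^ p.toReal := by gcongr

theorem eLpNorm_sub_indicator_compl_rpow (hp0 : p ≠ 0) (hp : p ≠ ∞) {S : Set Ω}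
    (hS : MeasurableSet S) (f h : Ω → X) :
    eLpNorm (f - Sᶜ.indicator h) p μ ^ p.toReal =
      eLpNorm (S.indicator f) p μ ^ p.toReal + eLpNorm (Sᶜ.indicator (f - h)) p μ ^ p.toReal := by
  have hin : S.indicator (f - Sᶜ.indicator h) = S.indicator f := by
    ext ω; by_cases hω : ω ∈ S <;> simp [hω]
  have hout : Sᶜ.indicator (f - Sᶜ.indicator h) = Sᶜ.indicator (f - h) := by
    ext ω; by_cases hω : ω ∈ S <;> simp [hω]
  rw [eLpNorm_rpow_eq_indicator_add_indicator_compl hp0 hp hS, hin, hout]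

theorem MeasureTheory.MemLp.tendsto_eLpNorm_indicator (hp0 : p ≠ 0) (hp : p ≠ ∞) {f : Ω → X}
    (hf : MemLp f p μ) {ι : Type*} {l : Filter ι} {S : ι → Set Ω} (hS : ∀ i, MeasurableSet (S i))
    (hμS : Tendsto (fun i => μ (S i)) l (𝓝 0)) :
    Tendsto (fun i => eLpNorm ((S i).indicator f) p μ) l (𝓝 0) := by
  have hq : 0 < p.toReal := ENNReal.toReal_pos hp0 hp
  have hfin : ∫⁻ ω, ‖f ω‖ₑ ^ p.toReal ∂μ ≠ ∞ := by
    rw [lintegral_rpow_enorm_eq_rpow_eLpNorm' hq, ← eLpNorm_eq_eLpNorm' hp0 hp]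
    exact ENNReal.rpow_ne_top_of_nonneg hq.le hf.eLpNorm_lt_top.ne
  refine ENNReal.tendsto_of_tendsto_rpow hq ?_
  simpa only [eLpNorm_indicator_eq_eLpNorm_restrict (hS _), eLpNorm_eq_eLpNorm' hp0 hp,
    ← lintegral_rpow_enorm_eq_rpow_eLpNorm' hq, ENNReal.zero_rpow_of_pos hq] using
    tendsto_setLIntegral_zero hfin hμS

theorem tendsto_eLpNorm_indicator_compl_of_le (hp0 : p ≠ 0) (hp : p ≠ ∞)
    {ι : Type*} {l : Filter ι} {f : Ω → X} (hf : MemLp f p μ) {h : ι → Ω → X}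
    (hh : ∀ i, AEStronglyMeasurable (h i) μ) {S : ι → Set Ω} (hS : ∀ i, MeasurableSet (S i))
    (hμS : Tendsto (fun i => μ (S i)) l (𝓝 0)) {m : ℝ≥0∞} (hm : m ≠ ∞)
    (hlim : Tendsto (fun i => eLpNorm (f - h i) p μ) l (𝓝 m))
    (hle : ∀ i, m ≤ eLpNorm (f - (S i)ᶜ.indicator (h i)) p μ) :
    Tendsto (fun i => eLpNorm ((S i)ᶜ.indicator (h i) - h i) p μ) l (𝓝 0) ∧
      Tendsto (fun i => eLpNorm (f - (S i)ᶜ.indicator (h i)) p μ) l (𝓝 m) := by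
  have hq : 0 < p.toReal := ENNReal.toReal_pos hp0 hp
  have hpow : ∀ {x : ι → ℝ≥0∞} {y : ℝ≥0∞}, Tendsto x l (𝓝 y) →
      Tendsto (fun i => x i ^ p.toReal) l (𝓝 (y ^ p.toReal)) :=
    fun hx => (ENNReal.continuous_rpow_const.tendsto _).comp hx
  have hfS := hf.tendsto_eLpNorm_indicator hp0 hp hS hμS
  obtain ⟨hbad, hgood⟩ := ENNReal.tendsto_zero_and_tendsto_of_le_add
    (a := fun i => eLpNorm ((S i).indicator (f - h i)) p μ ^ p.toReal)
    (b := fun i => eLpNorm ((S i)ᶜ.indicator (f - h i)) p μ ^ p.toReal)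
    (ENNReal.rpow_ne_top_of_nonneg hq.le hm)
    ((hpow hlim).congr fun i => eLpNorm_rpow_eq_indicator_add_indicator_compl hp0 hp (hS i) _)
    (by simpa [ENNReal.zero_rpow_of_pos hq] using hpow hfS)
    fun i => by
      rw [← eLpNorm_sub_indicator_compl_rpow hp0 hp (hS i)]
      exact ENNReal.rpow_le_rpow (hle i) hq.le
  refine ⟨?_, ENNReal.tendsto_of_tendsto_rpow hq <| hgood.congr fun i =>
    (eLpNorm_sub_indicator_compl_rpow hp0 hp (hS i) _ _).symm⟩
  have hupper := ENNReal.Tendsto.const_mul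
    ((ENNReal.tendsto_of_tendsto_rpow hq (by rwa [ENNReal.zero_rpow_of_pos hq])).add hfS)
    (Or.inr (ENNReal.LpAddConst_lt_top p).ne)
  rw [add_zero, mul_zero] at hupper
  refine tendsto_of_tendsto_of_tendsto_of_le_of_le tendsto_const_nhds hupper
    (fun _ => zero_le) fun i => ?_
  have hdiff : (S i)ᶜ.indicator (h i) - h i = (S i).indicator (f - h i) - (S i).indicator f := by
    ext ω; by_cases hω : ω ∈ S i <;> simp [hω]
  rw [hdiff]
  exact eLpNorm_sub_le' ((hf.1.sub (hh i)).indicator (hS i)) (hf.1.indicator (hS i)) p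

end

theorem minimizing_sequence_bounded_general
    {Ω X : Type*} [MeasurableSpace Ω] [NormedAddCommGroup X]
    (μ : Measure Ω) (p : ENNReal) (hp : 1 ≤ p) (hp' : p ≠ ⊤) (k : ℕ)
    (f : Ω → X) (hf : MemLp f p μ)
    (h : ℕ → Ω → X) (hmem : ∀ n, h n ∈ GSet μ p k)
    (hmin : Tendsto (fun n => eLpNorm (f - h n) p μ) atTop
      (𝓝 (⨅ g ∈ GSet (X := X) μ p k, eLpNorm (f - g) p μ))) :
    ∃ (g : ℕ → Ω → X) (φ : ℕ → ℕ), StrictMono φ ∧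
      (∀ n, g n ∈ GSet μ p k) ∧
      (∃ M : ℝ, ∀ n ω, ‖g n ω‖ ≤ M) ∧
      Tendsto (fun n => eLpNorm (g n - h (φ n)) p μ) atTop (𝓝 0) ∧
      Tendsto (fun n => eLpNorm (f - g n) p μ) atTop
        (𝓝 (⨅ g' ∈ GSet (X := X) μ p k, eLpNorm (f - g') p μ)) := by
  set m := ⨅ g ∈ GSet (X := X) μ p k, eLpNorm (f - g) p μ
  have hp0 : p ≠ 0 := (zero_lt_one.trans_le hp).ne'
  have hmle : ∀ g ∈ GSet (X := X) μ p k, m ≤ eLpNorm (f - g) p μ := fun g hg => iInf₂_le g hg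
  have hm : m ≠ ∞ := ((hmle _ (hmem 0)).trans_lt (hf.sub (hmem 0).1).2).ne
  have hmeas : ∀ n, AEStronglyMeasurable (h n) μ := fun n => (hmem n).2.1.aestronglyMeasurable
  choose s hs hhs using fun n => (hmem n).2.2
  obtain ⟨M, φ, hφ, hgap⟩ := exists_strictMono_gt_of_gt_of_card_le
    (fun n => (s n).image (‖·‖)) fun n => Finset.card_image_le.trans (hs n)
  obtain ⟨C, hC, hbound⟩ := exists_ne_top_eventually_eLpNorm_le hf hmeas hm hmin
  have hμS : Tendsto (fun j => μ {ω | (M : ℝ) < ‖h (φ j) ω‖}) atTop (𝓝 0) :=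
    tendsto_of_tendsto_of_tendsto_of_le_of_le tendsto_const_nhds
      (tendsto_measure_le_norm_of_eventually_eLpNorm_le hp0 hp' (fun j => hmeas (φ j)) hC
        (hφ.tendsto_atTop.eventually hbound) tendsto_natCast_atTop_atTop)
      (fun _ => zero_le) fun j => measure_mono fun ω hω =>
        (hgap j _ (Finset.mem_image_of_mem _ (hhs _ ω)) hω).le
  obtain ⟨hgh, hfg⟩ := tendsto_eLpNorm_indicator_compl_of_le hp0 hp' hf (fun j => hmeas (φ j))
    (fun j => measurableSet_lt measurable_const (hmem (φ j)).2.1.norm.measurable) hμS hm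
    (hmin.comp hφ.tendsto_atTop) fun j => hmle _ (indicator_compl_norm_gt_mem_GSet (hmem (φ j)) M)
  exact ⟨fun j => {ω | (M : ℝ) < ‖h (φ j) ω‖}ᶜ.indicator (h (φ j)), φ, hφ,
    fun j => indicator_compl_norm_gt_mem_GSet (hmem (φ j)) M,
    ⟨M, fun j => norm_indicator_compl_norm_gt_le M.cast_nonneg _⟩, hgh, hfg⟩

theorem minimizing_sequence_bounded
    {Ω X : Type*} [MeasurableSpace Ω] [NormedAddCommGroup X] [NormedSpace ℝ X]
    [CompleteSpace X]
    (μ : Measure Ω) (p : ENNReal) (hp : 1 ≤ p) (hp' : p ≠ ⊤) (k : ℕ) (hk : 1 ≤ k)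
    (f : Ω → X) (hf : MemLp f p μ)
    (h : ℕ → Ω → X) (hmem : ∀ n, h n ∈ GSet μ p k)
    (hmin : Tendsto (fun n => eLpNorm (f - h n) p μ) atTop
      (𝓝 (⨅ g ∈ GSet (X := X) μ p k, eLpNorm (f - g) p μ))) :
    ∃ (g : ℕ → Ω → X) (φ : ℕ → ℕ), StrictMono φ ∧
      (∀ n, g n ∈ GSet μ p k) ∧
      (∃ M : ℝ, ∀ n ω, ‖g n ω‖ ≤ M) ∧
      Tendsto (fun n => eLpNorm (g n - h (φ n)) p μ) atTop (𝓝 0) ∧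
      Tendsto (fun n => eLpNorm (f - g n) p μ) atTop
        (𝓝 (⨅ g' ∈ GSet (X := X) μ p k, eLpNorm (f - g') p μ)) :=
  minimizing_sequence_bounded_general μ p hp hp' k f hf h hmem hmin
end

section
/- Let (Ω,F,μ) be a measure space, p ∈ [1,∞), k ≥ 1, and X a dual Banach space whose closed unit ball is weak*-sequentially compact. Then the set G_{p,k}(X) of simple functions in L^p(Ω,μ;X) taking at most k values is proximinal in L^p(Ω,μ;X): every f ∈ L^p(Ω,μ;X) admits g ∈ G_{p,k}(X) with ‖f - g‖_p = inf_{h∈G_{p,k}(X)} ‖f - h‖_p. -/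
/-! A best approximation in `G_{p,k}` is the nearest-point map onto a best `k`-tuple of centres, so
it suffices to minimise the quantization cost `x ↦ ∫ minᵢ ‖f - xᵢ‖^p` over `k`-tuples. Along a
minimising sequence every centre either escapes to infinity in norm or, after passing to a
subsequence, converges weak*. The dual norm is weak*-lower semicontinuous and escaping centres
contribute `∞` to the pointwise liminf, so by Fatou the limit tuple (escaping centres replaced by
arbitrary points) is a minimiser; a measurable choice of nearest centre then gives the best
approximation. -/

open MeasureTheory Set Filter Topology

open scoped ENNReal NNReal

theorem ContinuousLinearMap.enorm_le_liminf_of_tendsto_apply {𝕜 E F ι : Type*}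
    [DenselyNormedField 𝕜] [NormedAddCommGroup E] [NormedSpace 𝕜 E]
    [SeminormedAddCommGroup F] [NormedSpace 𝕜 F] {l : Filter ι}
    {T : ι → E →L[𝕜] F} {T₀ : E →L[𝕜] F} (h : ∀ y, Tendsto (fun n => T n y) l (𝓝 (T₀ y))) :
    ‖T₀‖ₑ ≤ l.liminf (fun n => ‖T n‖ₑ) := by
  refine ENNReal.le_of_forall_nnreal_lt fun r hr => le_liminf_of_le (by isBoundedDefault) ?_
  obtain ⟨y, hy, hry⟩ := T₀.exists_lt_apply_of_lt_opNNNorm (coe_lt_enorm.mp hr)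
  filter_upwards [(h y).nnnorm.eventually (eventually_gt_nhds hry)] with n hn
  exact coe_le_enorm.mpr <| hn.le.trans <|
    ((T n).le_opNNNorm y).trans (mul_le_of_le_one_right' hy.le)

theorem exists_strictMono_forall_of_forall_exists_subseq {α : Type*} {P : (ℕ → α) → Prop}
    (hP : ∀ u, ∃ φ : ℕ → ℕ, StrictMono φ ∧ P (u ∘ φ))
    (hP_comp : ∀ u φ, StrictMono φ → P u → P (u ∘ φ)) :
    ∀ {m : ℕ} (u : Fin m → ℕ → α), ∃ φ : ℕ → ℕ, StrictMono φ ∧ ∀ i, P (u i ∘ φ)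
  | 0, _ => ⟨id, strictMono_id, fun i => i.elim0⟩
  | m + 1, u => by
    obtain ⟨φ₁, hφ₁, h₁⟩ := exists_strictMono_forall_of_forall_exists_subseq hP hP_comp
      (fun i => u i.castSucc)
    obtain ⟨φ₂, hφ₂, h₂⟩ := hP (u (Fin.last m) ∘ φ₁)
    refine ⟨φ₁ ∘ φ₂, hφ₁.comp hφ₂, Fin.lastCases h₂ fun i => ?_⟩
    exact hP_comp _ φ₂ hφ₂ (h₁ i)

section WeakStar

variable {𝕜 E F : Type*} [DenselyNormedField 𝕜] [NormedAddCommGroup E] [NormedSpace 𝕜 E]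
  [SeminormedAddCommGroup F] [NormedSpace 𝕜 F]

def WeakStarLimitOrEscape (u : ℕ → E →L[𝕜] F) (z : E →L[𝕜] F) : Prop :=
  (∀ y, Tendsto (fun n => u n y) atTop (𝓝 (z y))) ∨ Tendsto (fun n => ‖u n‖) atTop atTop

theorem WeakStarLimitOrEscape.comp {u : ℕ → E →L[𝕜] F} {z : E →L[𝕜] F}
    (h : WeakStarLimitOrEscape u z) {φ : ℕ → ℕ} (hφ : StrictMono φ) :
    WeakStarLimitOrEscape (u ∘ φ) z :=
  h.imp (fun h y => (h y).comp hφ.tendsto_atTop) fun h => h.comp hφ.tendsto_atTop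

theorem WeakStarLimitOrEscape.enorm_sub_le_liminf {u : ℕ → E →L[𝕜] F} {z : E →L[𝕜] F}
    (h : WeakStarLimitOrEscape u z) (a : E →L[𝕜] F) :
    ‖a - z‖ₑ ≤ atTop.liminf (fun n => ‖a - u n‖ₑ) := by
  rcases h with hlim | hesc
  · exact ContinuousLinearMap.enorm_le_liminf_of_tendsto_apply fun y =>
      tendsto_const_nhds.sub (hlim y)
  · have hdist : Tendsto (fun n => ‖a - u n‖) atTop atTop :=
      tendsto_atTop_mono (fun n => by linarith [norm_sub_norm_le (u n) a, norm_sub_rev a (u n)])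
        (tendsto_atTop_add_const_right atTop (-‖a‖) hesc)
    have htop : Tendsto (fun n => ‖a - u n‖ₑ) atTop (𝓝 ⊤) := by
      simpa only [Function.comp_def, ofReal_norm] using ENNReal.tendsto_ofReal_atTop.comp hdist
    rw [htop.liminf_eq]
    exact le_top

end WeakStar

def UnitBallWeakStarSeqCompact (Y : Type*) [NormedAddCommGroup Y] [NormedSpace ℝ Y] : Prop :=
  ∀ x : ℕ → (Y →L[ℝ] ℝ), (∀ n, ‖x n‖ ≤ 1) →
    ∃ φ : ℕ → ℕ, StrictMono φ ∧ ∃ x₀ : Y →L[ℝ] ℝ,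
      ∀ y : Y, Tendsto (fun n => x (φ n) y) atTop (𝓝 (x₀ y))

namespace UnitBallWeakStarSeqCompact

variable {Y : Type*} [NormedAddCommGroup Y] [NormedSpace ℝ Y]

theorem exists_subseq_tendsto_of_bounded (hY : UnitBallWeakStarSeqCompact Y)
    {u : ℕ → Y →L[ℝ] ℝ} {C : ℝ} (hC : ∀ n, ‖u n‖ ≤ C) :
    ∃ φ : ℕ → ℕ, StrictMono φ ∧ ∃ z : Y →L[ℝ] ℝ,
      ∀ y, Tendsto (fun n => u (φ n) y) atTop (𝓝 (z y)) := by
  set R := max C 1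
  have hR : 0 < R := lt_max_of_lt_right one_pos
  have hball : ∀ n, ‖R⁻¹ • u n‖ ≤ 1 := fun n => by
    rw [norm_smul, norm_inv, Real.norm_of_nonneg hR.le, inv_mul_le_one₀ hR]
    exact (hC n).trans (le_max_left C 1)
  obtain ⟨φ, hφ, z, hz⟩ := hY _ hball
  refine ⟨φ, hφ, R • z, fun y => ?_⟩
  convert (hz y).const_mul R using 2 with n
  · simp [hR.ne']
  · simp

theorem exists_subseq_weakStarLimitOrEscape (hY : UnitBallWeakStarSeqCompact Y)
    (u : ℕ → Y →L[ℝ] ℝ) :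
    ∃ φ : ℕ → ℕ, StrictMono φ ∧ ∃ z, WeakStarLimitOrEscape (u ∘ φ) z := by
  by_cases hesc : Tendsto (fun n => ‖u n‖) atTop atTop
  · exact ⟨id, strictMono_id, 0, Or.inr hesc⟩
  rw [tendsto_atTop] at hesc
  push Not at hesc
  obtain ⟨C, hC⟩ := hesc
  obtain ⟨ψ, hψ, hψC⟩ := extraction_of_frequently_atTop (hC.mono fun _ => le_of_lt)
  obtain ⟨φ, hφ, z, hz⟩ := hY.exists_subseq_tendsto_of_bounded hψC
  exact ⟨ψ ∘ φ, hψ.comp hφ, z, Or.inl hz⟩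

end UnitBallWeakStarSeqCompact

theorem Finset.exists_fin_subset_range {α : Type*} [Zero α] {s : Finset α} {k : ℕ}
    (hs : s.card ≤ k) : ∃ x : Fin k → α, ↑s ⊆ Set.range x := by
  refine ⟨fun i => s.toList.getD i 0, fun a ha => ?_⟩
  obtain ⟨n, hn, rfl⟩ := List.mem_iff_getElem.mp (Finset.mem_toList.mpr ha)
  exact ⟨⟨n, (s.length_toList ▸ hn).trans_le hs⟩, List.getD_eq_getElem _ _ hn⟩

theorem exists_measurable_argmin {Ω β : Type*} [MeasurableSpace Ω] [LinearOrder β]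
    [TopologicalSpace β] [OrderClosedTopology β] [MeasurableSpace β] [OpensMeasurableSpace β]
    [SecondCountableTopology β] {k : ℕ} [NeZero k] (A : Fin k → Ω → β)
    (hA : ∀ i, Measurable (A i)) :
    ∃ σ : Ω → Fin k, Measurable σ ∧ ∀ ω i, A (σ ω) ω ≤ A i ω := by
  classical
  let IsMin (i : Fin k) (ω : Ω) : Prop := ∀ j, A i ω ≤ A j ω
  have hmin : ∀ i, MeasurableSet {ω | IsMin i ω} := fun i => by
    simp only [IsMin, ofPred_forall]
    exact .iInter fun j => measurableSet_le (hA i) (hA j)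
  have hex : ∀ ω, ∃ i, IsMin i ω := fun ω => Finite.exists_min (A · ω)
  refine ⟨fun ω => Fin.find (IsMin · ω) (hex ω), measurable_to_countable' fun i => ?_,
    fun ω => Fin.find_spec (hex ω)⟩
  simp only [preimage, mem_singleton_iff, Fin.find_eq_iff, ofPred_and, ofPred_forall]
  exact (hmin i).inter (.iInter fun j => .iInter fun _ => (hmin j).compl)

section Quantization

variable {Ω E : Type*} [MeasurableSpace Ω] [NormedAddCommGroup E] {μ : Measure Ω} {q : ℝ}

noncomputable def quantizationCost {ι : Type*} (μ : Measure Ω) (q : ℝ) (f : Ω → E) (x : ι → E) :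
    ℝ≥0∞ :=
  ∫⁻ ω, ⨅ i, ‖f ω - x i‖ₑ ^ q ∂μ

theorem iInf_quantizationCost_le_lintegral {k : ℕ} {f g : Ω → E} {s : Finset E}
    (hs : s.card ≤ k) (hg : ∀ ω, g ω ∈ s) :
    ⨅ x : Fin k → E, quantizationCost μ q f x ≤ ∫⁻ ω, ‖f ω - g ω‖ₑ ^ q ∂μ := by
  obtain ⟨x, hx⟩ := Finset.exists_fin_subset_range hs
  refine iInf_le_of_le x (lintegral_mono fun ω => ?_)
  obtain ⟨i, hi⟩ := hx (hg ω)
  exact iInf_le_of_le i (by rw [hi])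

theorem lintegral_eq_quantizationCost_of_nearest {ι : Type*} (hq : 0 ≤ q) {f : Ω → E}
    {x : ι → E} {σ : Ω → ι} (hσ : ∀ ω i, ‖f ω - x (σ ω)‖ₑ ≤ ‖f ω - x i‖ₑ) :
    ∫⁻ ω, ‖f ω - x (σ ω)‖ₑ ^ q ∂μ = quantizationCost μ q f x :=
  lintegral_congr fun ω =>
    le_antisymm (le_iInf fun i => ENNReal.rpow_le_rpow (hσ ω i) hq) (iInf_le _ (σ ω))

end Quantization

section WeakStarQuantization

variable {Ω Y : Type*} [MeasurableSpace Ω] [NormedAddCommGroup Y] [NormedSpace ℝ Y]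
  {μ : Measure Ω} {q : ℝ}

theorem quantizationCost_le_liminf {ι : Type*} [Finite ι] (hq : 0 ≤ q)
    {f : Ω → Y →L[ℝ] ℝ} (hf : AEStronglyMeasurable f μ) {x : ℕ → ι → Y →L[ℝ] ℝ}
    {z : ι → Y →L[ℝ] ℝ} (hxz : ∀ i, WeakStarLimitOrEscape (fun n => x n i) (z i)) :
    quantizationCost μ q f z ≤ atTop.liminf (fun n => quantizationCost μ q f (x n)) := by
  have hpow : Monotone fun a : ℝ≥0∞ => a ^ q := fun a b hab => ENNReal.rpow_le_rpow hab hq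
  have hpt : ∀ ω, ⨅ i, ‖f ω - z i‖ₑ ^ q ≤ atTop.liminf fun n => ⨅ i, ‖f ω - x n i‖ₑ ^ q := by
    intro ω
    have := Fintype.ofFinite ι
    calc ⨅ i, ‖f ω - z i‖ₑ ^ q ≤ ⨅ i, atTop.liminf fun n => ‖f ω - x n i‖ₑ ^ q :=
          iInf_mono fun i => (hpow ((hxz i).enorm_sub_le_liminf (f ω))).trans_eq
            (hpow.map_liminf_of_continuousAt _ ENNReal.continuous_rpow_const.continuousAt)
      _ = atTop.liminf fun n => ⨅ i, ‖f ω - x n i‖ₑ ^ q := by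
          simp only [← Finset.inf_univ_eq_iInf]
          exact (liminf_finset_inf).symm
  refine (lintegral_mono hpt).trans (lintegral_liminf_le' fun n => ?_)
  exact AEMeasurable.iInf fun i => (hf.sub aestronglyMeasurable_const).enorm.pow_const q

theorem exists_quantizationCost_eq_iInf (hY : UnitBallWeakStarSeqCompact Y) (hq : 0 ≤ q)
    {f : Ω → Y →L[ℝ] ℝ} (hf : AEStronglyMeasurable f μ) (k : ℕ) :
    ∃ z : Fin k → Y →L[ℝ] ℝ,
      quantizationCost μ q f z = ⨅ x : Fin k → Y →L[ℝ] ℝ, quantizationCost μ q f x := by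
  obtain ⟨c, -, hc, hcx⟩ := exists_seq_tendsto_sInf
    (range_nonempty fun x : Fin k → Y →L[ℝ] ℝ => quantizationCost μ q f x) (OrderBot.bddBelow _)
  choose x hx using hcx
  obtain ⟨φ, hφ, hsub⟩ := exists_strictMono_forall_of_forall_exists_subseq
    (P := fun u => ∃ z, WeakStarLimitOrEscape u z) hY.exists_subseq_weakStarLimitOrEscape
    (fun _ _ hφ ⟨z, h⟩ => ⟨z, h.comp hφ⟩) (fun i n => x n i)
  choose z hz using hsub
  refine ⟨z, le_antisymm ?_ (iInf_le _ z)⟩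
  calc quantizationCost μ q f z ≤ atTop.liminf fun n => quantizationCost μ q f (x (φ n)) :=
        quantizationCost_le_liminf hq hf hz
    _ = ⨅ x : Fin k → Y →L[ℝ] ℝ, quantizationCost μ q f x := by
        simp only [hx, ← sInf_range]
        exact (hc.comp hφ.tendsto_atTop).liminf_eq

end WeakStarQuantization

theorem comp_mem_GSet {Ω X : Type*} [MeasurableSpace Ω] [NormedAddCommGroup X] {μ : Measure Ω}
    {p : ℝ≥0∞} {k : ℕ} {z : Fin k → X} {σ : Ω → Fin k} (hσ : Measurable σ)
    (hg : MemLp (z ∘ σ) p μ) : z ∘ σ ∈ GSet μ p k := by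
  classical
  exact ⟨hg, StronglyMeasurable.of_discrete.comp_measurable hσ, Finset.univ.image z,
    Finset.card_image_le.trans (by simp), fun _ => Finset.mem_image_of_mem z (Finset.mem_univ _)⟩

theorem zero_mem_GSet {Ω X : Type*} [MeasurableSpace Ω] [NormedAddCommGroup X] {μ : Measure Ω}
    {p : ℝ≥0∞} {k : ℕ} (hk : 1 ≤ k) : (0 : Ω → X) ∈ GSet μ p k :=
  ⟨MemLp.zero, stronglyMeasurable_const, {0}, by simpa using hk, fun _ => by simp⟩

theorem Gpk_proximinal_general
    {Ω Y : Type*} [MeasurableSpace Ω] [NormedAddCommGroup Y] [NormedSpace ℝ Y]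
    (μ : Measure Ω) (p : ENNReal) (hp : 1 ≤ p) (hp' : p ≠ ⊤) (k : ℕ) (hk : 1 ≤ k)
    -- the unit ball of X = Y* is weak*-sequentially compact
    (hwsc : ∀ x : ℕ → (Y →L[ℝ] ℝ), (∀ n, ‖x n‖ ≤ 1) →
      ∃ φ : ℕ → ℕ, StrictMono φ ∧ ∃ x₀ : Y →L[ℝ] ℝ,
        ∀ y : Y, Tendsto (fun n => x (φ n) y) atTop (𝓝 (x₀ y)))
    (f : Ω → (Y →L[ℝ] ℝ)) (hf : MemLp f p μ) :
    ∃ g ∈ GSet (X := Y →L[ℝ] ℝ) μ p k,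
      eLpNorm (f - g) p μ = ⨅ h ∈ GSet (X := Y →L[ℝ] ℝ) μ p k, eLpNorm (f - h) p μ := by
  have hp0 : p ≠ 0 := (zero_lt_one.trans_le hp).ne'
  have : NeZero k := NeZero.of_pos hk
  obtain ⟨f', hf'm, hff'⟩ := hf.aestronglyMeasurable
  obtain ⟨z, hz⟩ := exists_quantizationCost_eq_iInf (μ := μ) hwsc ENNReal.toReal_nonneg
    hf'm.aestronglyMeasurable k
  obtain ⟨σ, hσ, hnear⟩ := exists_measurable_argmin (fun i ω => ‖f' ω - z i‖ₑ)
    fun i => (hf'm.sub stronglyMeasurable_const).enorm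
  have hopt : ∀ h ∈ GSet μ p k, eLpNorm (f - z ∘ σ) p μ ≤ eLpNorm (f - h) p μ := by
    rintro h ⟨-, -, s, hs, hhs⟩
    rw [eLpNorm_congr_ae (hff'.sub EventuallyEq.rfl),
      eLpNorm_congr_ae (hff'.sub EventuallyEq.rfl), eLpNorm_eq_lintegral_rpow_enorm_toReal hp0 hp',
      eLpNorm_eq_lintegral_rpow_enorm_toReal hp0 hp']
    gcongr ?_ ^ _
    calc _ = quantizationCost μ p.toReal f' z :=
          lintegral_eq_quantizationCost_of_nearest ENNReal.toReal_nonneg hnear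
      _ ≤ _ := hz ▸ iInf_quantizationCost_le_lintegral hs hhs
  have hg : z ∘ σ ∈ GSet μ p k := by
    refine comp_mem_GSet hσ ?_
    have hfg : MemLp (f - z ∘ σ) p μ :=
      ⟨hf.1.sub (StronglyMeasurable.of_discrete.comp_measurable hσ).aestronglyMeasurable,
        (hopt 0 (zero_mem_GSet hk)).trans_lt (by simpa using hf.2)⟩
    simpa using hf.sub hfg
  exact ⟨z ∘ σ, hg, le_antisymm (le_iInf₂ hopt) (iInf₂_le _ hg)⟩

/-- Theorem 1: `G_{p,k}(X)` is proximinal in `L^p(Ω,μ;X)` whenever `X` is a dual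
Banach space with weak*-sequentially compact unit ball. -/
theorem Gpk_proximinal
    {Ω Y : Type*} [MeasurableSpace Ω] [NormedAddCommGroup Y] [NormedSpace ℝ Y]
    [CompleteSpace Y]
    (μ : Measure Ω) (p : ENNReal) (hp : 1 ≤ p) (hp' : p ≠ ⊤) (k : ℕ) (hk : 1 ≤ k)
    -- the unit ball of X = Y* is weak*-sequentially compact
    (hwsc : ∀ x : ℕ → (Y →L[ℝ] ℝ), (∀ n, ‖x n‖ ≤ 1) →
      ∃ φ : ℕ → ℕ, StrictMono φ ∧ ∃ x₀ : Y →L[ℝ] ℝ,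
        ∀ y : Y, Tendsto (fun n => x (φ n) y) atTop (𝓝 (x₀ y)))
    (f : Ω → (Y →L[ℝ] ℝ)) (hf : MemLp f p μ) :
    ∃ g ∈ GSet (X := Y →L[ℝ] ℝ) μ p k,
      eLpNorm (f - g) p μ = ⨅ h ∈ GSet (X := Y →L[ℝ] ℝ) μ p k, eLpNorm (f - h) p μ :=
  Gpk_proximinal_general μ p hp hp' k hk hwsc f hf
end

section
/- Let X be a finite-dimensional Banach space, (Ω,F,μ) a measure space, and k ≥ 1. Then the set G_{∞,k}(X) of simple functions taking at most k values is proximinal in L^∞(Ω,μ;X). -/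
/-!
For a codebook `c : Fin k → X` let `E(c) = ess sup_ω min_i ‖f ω - c i‖` (`quantizationError`).
Every `g ∈ G_{∞,k}(X)` takes its values in some codebook `c`, and then `E(c) ≤ ‖f - g‖_∞`;
conversely, composing `f` with a measurable nearest-point selection for `c` gives
`g ∈ G_{∞,k}(X)` with `‖f - g‖_∞ ≤ E(c)`. So it suffices that `E` attains its infimum. `E` is
1-Lipschitz for the sup distance on codebooks, and moving every centre with `‖c i‖ > 2‖f‖_∞`
to `0` does not increase `E`; hence a minimizer of `E` on the compact set
`(closedBall 0 (2‖f‖_∞))^k` is a global one.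
-/

open MeasureTheory Set Filter Topology

open scoped ENNReal NNReal

lemma Finset.exists_fin_range_superset {α : Type*} [Nonempty α] (s : Finset α) {k : ℕ}
    (hs : s.card ≤ k) : ∃ c : Fin k → α, ↑s ⊆ Set.range c := by
  classical
  refine ⟨fun i => if h : (i : ℕ) < s.card then s.equivFin.symm ⟨i, h⟩ else Classical.arbitrary α,
    fun y hy => ⟨Fin.castLE hs (s.equivFin ⟨y, hy⟩), by simp⟩⟩

lemma exists_measurable_argmin_s15 {α ι : Type*} [MeasurableSpace α] [Fintype ι] [LinearOrder ι]
    [Nonempty ι] [MeasurableSpace ι] {φ : ι → α → ℝ} (hφ : ∀ i, Measurable (φ i)) :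
    ∃ idx : α → ι, Measurable idx ∧ ∀ x j, φ (idx x) x ≤ φ j x := by
  classical
  let P : ι → Set α := fun i => ⋂ j, {x | φ i x ≤ φ j x}
  have hP : ∀ i, MeasurableSet (P i) := fun i =>
    MeasurableSet.iInter fun j => measurableSet_le (hφ i) (hφ j)
  have hne : ∀ x, (Finset.univ.filter fun i => x ∈ P i).Nonempty := fun x => by
    obtain ⟨i, hi⟩ := Finite.exists_min (φ · x)
    exact ⟨i, by simpa [P] using hi⟩
  -- The least minimizing index: its fibres are Boolean combinations of the sets `P i`.
  refine ⟨fun x => (Finset.univ.filter fun i => x ∈ P i).min' (hne x),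
    measurable_to_countable' fun i => ?_, fun x => ?_⟩
  · have : (fun x => (Finset.univ.filter fun i => x ∈ P i).min' (hne x)) ⁻¹' {i} =
        P i ∩ ⋂ j, ⋂ _ : j < i, (P j)ᶜ := by
      ext x
      simp only [mem_preimage, mem_singleton_iff, Finset.min'_eq_iff, Finset.mem_filter,
        Finset.mem_univ, true_and, mem_inter_iff, mem_iInter, mem_compl_iff]
      refine and_congr_right fun _ => forall_congr' fun j => ?_
      rw [imp_not_comm, not_lt]
    rw [this]
    exact (hP i).inter (.iInter fun j => .iInter fun _ => (hP j).compl)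
  · simpa [P] using (Finset.mem_filter.1 (Finset.min'_mem _ (hne x))).2

noncomputable def quantizationError {Ω X ι : Type*} [MeasurableSpace Ω] [PseudoEMetricSpace X]
    (μ : Measure Ω) (f : Ω → X) (c : ι → X) : ℝ≥0∞ :=
  essSup (fun ω => ⨅ i, edist (f ω) (c i)) μ

section quantizationError

variable {Ω ι : Type*} [MeasurableSpace Ω] {μ : Measure Ω}

lemma quantizationError_le_add_edist {X : Type*} [PseudoEMetricSpace X] [Fintype ι]
    (f : Ω → X) (c c' : ι → X) :
    quantizationError μ f c ≤ quantizationError μ f c' + edist c c' := by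
  have hpoint : ∀ ω, ⨅ i, edist (f ω) (c i) ≤ (⨅ i, edist (f ω) (c' i)) + edist c c' :=
    fun ω => by
      rw [ENNReal.iInf_add]
      exact le_iInf fun i => iInf_le_of_le i <| (edist_triangle _ (c' i) _).trans <|
        by gcongr; rw [edist_comm]; exact edist_le_pi_edist c c' i
  calc quantizationError μ f c
      ≤ essSup ((fun ω => ⨅ i, edist (f ω) (c' i)) + fun _ => edist c c') μ :=
        essSup_mono_ae (.of_forall hpoint)
    _ ≤ quantizationError μ f c' + essSup (fun _ => edist c c') μ := ENNReal.essSup_add_le _ _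
    _ ≤ quantizationError μ f c' + edist c c' := by
        gcongr; exact essSup_le_of_ae_le _ (.of_forall fun _ => le_rfl)

lemma continuous_quantizationError {X : Type*} [PseudoEMetricSpace X] [Fintype ι] (f : Ω → X) :
    Continuous (quantizationError (ι := ι) μ f) :=
  continuous_of_le_add_edist 1 ENNReal.one_ne_top fun c c' => by
    simpa using quantizationError_le_add_edist f c c'

variable {X : Type*} [NormedAddCommGroup X]

lemma quantizationError_le_eLpNorm_sub {f g : Ω → X} {c : ι → X} (hg : ∀ ω, g ω ∈ range c) :
    quantizationError μ f c ≤ eLpNorm (f - g) ⊤ μ := by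
  rw [eLpNorm_exponent_top]
  refine essSup_mono_ae (.of_forall fun ω => ?_)
  obtain ⟨i, hi⟩ := hg ω
  exact iInf_le_of_le i (by rw [hi, edist_eq_enorm_sub]; rfl)

lemma norm_le_norm_sub_of_two_mul_lt {x y : X} {M : ℝ} (hx : ‖x‖ ≤ M) (hy : 2 * M < ‖y‖) :
    ‖x‖ ≤ ‖x - y‖ := by
  have := norm_sub_norm_le y x
  rw [norm_sub_rev] at this
  linarith

lemma exists_forall_quantizationError_le [ProperSpace X] [Finite ι] {f : Ω → X} {C : ℝ≥0}
    (hC : ∀ᵐ ω ∂μ, ‖f ω‖₊ ≤ C) :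
    ∃ c : ι → X, ∀ c' : ι → X, quantizationError μ f c ≤ quantizationError μ f c' := by
  have := Fintype.ofFinite ι
  set S : Set (ι → X) := univ.pi fun _ => Metric.closedBall 0 (2 * C)
  have hS : IsCompact S := isCompact_univ_pi fun _ => isCompact_closedBall _ _
  obtain ⟨c, -, hc⟩ :=
    hS.exists_isMinOn ⟨0, fun _ _ => by simp⟩ (continuous_quantizationError f).continuousOn
  refine ⟨c, fun c' => ?_⟩
  -- Centres far from the essential range of `f` are never nearest, so they may be moved to `0`.
  let c'' : ι → X := fun i => if ‖c' i‖ ≤ 2 * C then c' i else 0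
  have hc''S : c'' ∈ S := fun i _ => by
    by_cases h : ‖c' i‖ ≤ 2 * C <;> simp [c'', h]
  refine (hc hc''S).trans (essSup_mono_ae ?_)
  filter_upwards [hC] with ω hω
  refine le_iInf fun i => iInf_le_of_le i ?_
  by_cases h : ‖c' i‖ ≤ 2 * C
  · simp [c'', h]
  · simp only [c'', h, if_false, edist_dist, dist_eq_norm, sub_zero]
    exact ENNReal.ofReal_le_ofReal (norm_le_norm_sub_of_two_mul_lt hω (not_le.1 h))

lemma exists_mem_GSet_eLpNorm_sub_le_quantizationError {k : ℕ} [NeZero k] {f : Ω → X}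
    (hf : AEStronglyMeasurable f μ) (c : Fin k → X) :
    ∃ g ∈ GSet μ ⊤ k, eLpNorm (f - g) ⊤ μ ≤ quantizationError μ f c := by
  classical
  obtain ⟨idx, hidx, hmin⟩ := exists_measurable_argmin_s15 (φ := fun i ω => ‖hf.mk f ω - c i‖)
    fun i => (hf.stronglyMeasurable_mk.sub stronglyMeasurable_const).norm.measurable
  have hg : StronglyMeasurable (c ∘ idx) := StronglyMeasurable.of_discrete.comp_measurable hidx
  refine ⟨c ∘ idx, ⟨?_, hg, Finset.univ.image c, ?_, fun ω => ?_⟩, ?_⟩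
  · refine memLp_top_of_bound hg.aestronglyMeasurable (⨆ i, ‖c i‖) (.of_forall fun ω => ?_)
    exact le_ciSup (Finite.bddAbove_range fun i => ‖c i‖) (idx ω)
  · exact Finset.card_image_le.trans (by simp)
  · exact Finset.mem_image_of_mem c (Finset.mem_univ _)
  · rw [eLpNorm_exponent_top]
    refine essSup_mono_ae ?_
    filter_upwards [hf.ae_eq_mk] with ω hω
    refine le_iInf fun j => ?_
    simp only [Pi.sub_apply, Function.comp_apply, hω, edist_dist, dist_eq_norm, ← ofReal_norm]
    exact ENNReal.ofReal_le_ofReal (hmin ω j)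

end quantizationError

/-- In a finite-dimensional Banach space, `G_{∞,k}(X)` is proximinal in `L^∞`. -/
theorem Ginftyk_proximinal_of_finiteDimensional
    {Ω X : Type*} [MeasurableSpace Ω] [NormedAddCommGroup X] [NormedSpace ℝ X]
    [FiniteDimensional ℝ X]
    (μ : Measure Ω) (k : ℕ) (hk : 1 ≤ k)
    (f : Ω → X) (hf : MemLp f ⊤ μ) :
    ∃ g ∈ GSet (X := X) μ ⊤ k,
      eLpNorm (f - g) ⊤ μ = ⨅ h ∈ GSet (X := X) μ ⊤ k, eLpNorm (f - h) ⊤ μ := by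
  have : NeZero k := ⟨by omega⟩
  obtain ⟨C, hC⟩ := eLpNormEssSup_lt_top_iff_isBoundedUnder.1
    (by simpa only [eLpNorm_exponent_top] using hf.2)
  obtain ⟨c, hc⟩ := exists_forall_quantizationError_le (ι := Fin k) hC
  obtain ⟨g, hg, hfg⟩ := exists_mem_GSet_eLpNorm_sub_le_quantizationError hf.1 c
  refine ⟨g, hg, le_antisymm (le_iInf₂ fun h ⟨_, _, s, hs, hhs⟩ => ?_) (iInf₂_le g hg)⟩
  obtain ⟨c', hc'⟩ := s.exists_fin_range_superset hs
  exact hfg.trans <| (hc c').trans <| quantizationError_le_eLpNorm_sub fun ω => hc' (hhs ω)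
end

section
/- Let (Ω,F,μ) be a measure space, X a Banach space, p ∈ [1,∞), k ≥ 1, and f ∈ L^p(Ω,μ;X). If f admits a minimizer g ∈ G_{p,k}(X) (i.e., ‖f-g‖_p = dist(f, G_{p,k}(X))) whose degree r = deg(g) is strictly less than k, then f itself belongs to G_{p,r}(X), i.e., f equals μ-a.e. a simple function taking at most r values. -/
/-!
If `f` were not a.e. equal to the best approximation `g`, which takes at most `r < k` values, one
more value could be spent on improving it. The range of (a strongly measurable version of) `f` is
separable, so some point `x` of a countable dense subset is strictly closer to `f` than `g` is on
a set `A` of positive measure. Replacing `g` by `x` on `A` yields an element of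
`G_{p,r+1} ⊆ G_{p,k}` that is pointwise no farther from `f` and strictly closer on `A`; since
`p < ∞` this strictly decreases `‖f - g‖_p`, contradicting minimality.
-/

open MeasureTheory Set Filter Topology

open scoped ENNReal

theorem norm_sub_piecewise_const_le {Ω X : Type*} [NormedAddCommGroup X] {f g : Ω → X}
    {A : Set Ω} [DecidablePred (· ∈ A)] {x : X} (hle : ∀ ω ∈ A, ‖f ω - x‖ ≤ ‖f ω - g ω‖)
    (ω : Ω) : ‖f ω - A.piecewise (fun _ => x) g ω‖ ≤ ‖f ω - g ω‖ := by
  by_cases hω : ω ∈ A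
  · simpa [hω] using hle ω hω
  · simp [hω]

section

variable {Ω : Type*} [MeasurableSpace Ω] {μ : Measure Ω}

theorem exists_frequently_dist_lt_of_frequently_ne {E : Type*} [MetricSpace E] {f g : Ω → E}
    (hf : TopologicalSpace.IsSeparable (range f)) (hfg : ∃ᵐ ω ∂μ, f ω ≠ g ω) :
    ∃ x, ∃ᵐ ω ∂μ, dist (f ω) x < dist (f ω) (g ω) := by
  obtain ⟨c, hc, hfc⟩ := hf
  by_contra! h
  have hall : ∀ᵐ ω ∂μ, ∀ x ∈ c, dist (f ω) (g ω) ≤ dist (f ω) x :=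
    (ae_ball_iff hc).2 fun x _ => h x
  refine hfg (hall.mono fun ω hω hne => ?_)
  obtain ⟨x, hxc, hx⟩ := Metric.mem_closure_iff.1 (hfc (mem_range_self ω)) _ (dist_pos.2 hne)
  exact (hω x hxc).not_gt hx

theorem eLpNorm_lt_eLpNorm_of_ae_norm_le_of_ae_lt_on {E F : Type*} [NormedAddCommGroup E]
    [NormedAddCommGroup F] {p : ℝ≥0∞} (hp0 : p ≠ 0) (hp : p ≠ ∞) {u : Ω → E} {v : Ω → F}
    (hv : AEStronglyMeasurable v μ) (hu : eLpNorm u p μ ≠ ∞) (hle : ∀ᵐ ω ∂μ, ‖u ω‖ ≤ ‖v ω‖)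
    {s : Set Ω} (hs : μ s ≠ 0) (hlt : ∀ᵐ ω ∂μ, ω ∈ s → ‖u ω‖ < ‖v ω‖) :
    eLpNorm u p μ < eLpNorm v p μ := by
  have hq : 0 < p.toReal := ENNReal.toReal_pos hp0 hp
  rw [eLpNorm_eq_lintegral_rpow_enorm_toReal hp0 hp, eLpNorm_eq_lintegral_rpow_enorm_toReal hp0 hp]
  refine ENNReal.rpow_lt_rpow (lintegral_strict_mono_of_ae_le_of_ae_lt_on
    (hv.enorm.pow_const _) (lintegral_rpow_enorm_lt_top_of_eLpNorm_lt_top hp0 hp hu.lt_top).ne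
    ?_ hs ?_) (by positivity)
  · filter_upwards [hle] with ω h
    exact ENNReal.rpow_le_rpow
      (by simpa only [← ofReal_norm] using ENNReal.ofReal_le_ofReal h) hq.le
  · filter_upwards [hlt] with ω h hω
    exact ENNReal.rpow_lt_rpow (by simpa only [← ofReal_norm] using
      (ENNReal.ofReal_lt_ofReal_iff_of_nonneg (norm_nonneg _)).2 (h hω)) hq

variable {X : Type*} [NormedAddCommGroup X] {p : ℝ≥0∞}

theorem GSet_mono {k l : ℕ} (hkl : k ≤ l) : GSet (X := X) μ p k ⊆ GSet μ p l :=
  fun _ ⟨hgp, hgm, s, hs, hgs⟩ => ⟨hgp, hgm, s, hs.trans hkl, hgs⟩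

theorem piecewise_const_mem_GSet_succ {f g : Ω → X} {r : ℕ} {A : Set Ω} [DecidablePred (· ∈ A)]
    (hA : MeasurableSet A) {x : X} (hf : MemLp f p μ) (hg : g ∈ GSet μ p r)
    (hle : ∀ ω ∈ A, ‖f ω - x‖ ≤ ‖f ω - g ω‖) :
    A.piecewise (fun _ => x) g ∈ GSet μ p (r + 1) := by
  classical
  obtain ⟨hgp, hgm, s, hs, hgs⟩ := hg
  have hm : StronglyMeasurable (A.piecewise (fun _ => x) g) :=
    stronglyMeasurable_const.piecewise hA hgm
  -- the competitor is in `L^p` because it is no farther from `f` than `g` is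
  have hfh : MemLp (f - A.piecewise (fun _ => x) g) p μ :=
    (hf.sub hgp).of_le (hf.1.sub hm.aestronglyMeasurable)
      (Eventually.of_forall (norm_sub_piecewise_const_le hle))
  refine ⟨by simpa using hf.sub hfh, hm, insert x s, (Finset.card_insert_le _ _).trans (by omega),
    fun ω => ?_⟩
  by_cases hω : ω ∈ A <;> simp [hω, hgs ω]

theorem ae_eq_of_forall_eLpNorm_sub_le {f g : Ω → X} {r : ℕ} (hp0 : p ≠ 0) (hp : p ≠ ∞)
    (hf : MemLp f p μ) (hg : g ∈ GSet μ p r)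
    (hmin : ∀ h ∈ GSet μ p (r + 1), eLpNorm (f - g) p μ ≤ eLpNorm (f - h) p μ) :
    f =ᵐ[μ] g := by
  wlog hfm : StronglyMeasurable f generalizing f
  · have hff₀ := hf.1.ae_eq_mk
    refine hff₀.trans (this (hf.ae_eq hff₀) (fun h hh => ?_) hf.1.stronglyMeasurable_mk)
    have hsub (h : Ω → X) : eLpNorm (f - h) p μ = eLpNorm (hf.1.mk f - h) p μ :=
      eLpNorm_congr_ae (hff₀.sub EventuallyEq.rfl)
    simpa only [hsub] using hmin h hh
  classical
  by_contra hne
  obtain ⟨x, hx⟩ := exists_frequently_dist_lt_of_frequently_ne hfm.isSeparable_range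
    (not_eventually.1 hne)
  simp only [dist_eq_norm] at hx
  set A := {ω | ‖f ω - x‖ < ‖f ω - g ω‖}
  have hA : MeasurableSet A := measurableSet_lt (hfm.sub stronglyMeasurable_const).norm.measurable
    (hfm.sub hg.2.1).norm.measurable
  have hle : ∀ ω ∈ A, ‖f ω - x‖ ≤ ‖f ω - g ω‖ := fun _ hω => hω.le
  have hhG := piecewise_const_mem_GSet_succ hA hf hg hle
  refine (hmin _ hhG).not_gt (eLpNorm_lt_eLpNorm_of_ae_norm_le_of_ae_lt_on hp0 hp
    (hf.sub hg.1).1 (hf.sub hhG.1).eLpNorm_lt_top.ne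
    (Eventually.of_forall (norm_sub_piecewise_const_le hle))
    (frequently_ae_iff.1 hx) (Eventually.of_forall fun ω hω => ?_))
  rw [Pi.sub_apply, Pi.sub_apply, Set.piecewise_eq_of_mem _ _ _ hω]
  exact hω

end

theorem mem_Gpr_of_minimizer_low_degree_general
    {Ω X : Type*} [MeasurableSpace Ω] [NormedAddCommGroup X]
    (μ : Measure Ω) (p : ENNReal) (hp : 1 ≤ p) (hp' : p ≠ ⊤) (k r : ℕ)
    (hr : r < k)
    (f : Ω → X) (hf : MemLp f p μ)
    (g : Ω → X)
    -- g is a minimizer for f in G_{p,k}(X)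
    (hmin : eLpNorm (f - g) p μ = ⨅ h ∈ GSet (X := X) μ p k, eLpNorm (f - h) p μ)
    -- the degree of g is at most r : g agrees a.e. with a simple function with ≤ r values
    (hdeg : ∃ g' : Ω → X, g' ∈ GSet μ p r ∧ g =ᵐ[μ] g') :
    ∃ s : Ω → X, s ∈ GSet μ p r ∧ f =ᵐ[μ] s := by
  obtain ⟨g', hg', hgg'⟩ := hdeg
  refine ⟨g', hg', ae_eq_of_forall_eLpNorm_sub_le (one_pos.trans_le hp).ne' hp' hf hg'
    fun h hh => ?_⟩
  calc eLpNorm (f - g') p μ = eLpNorm (f - g) p μ :=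
        eLpNorm_congr_ae (EventuallyEq.rfl.sub hgg'.symm)
    _ = ⨅ h ∈ GSet (X := X) μ p k, eLpNorm (f - h) p μ := hmin
    _ ≤ eLpNorm (f - h) p μ := iInf₂_le h (GSet_mono hr hh)

theorem mem_Gpr_of_minimizer_low_degree
    {Ω X : Type*} [MeasurableSpace Ω] [NormedAddCommGroup X] [NormedSpace ℝ X]
    [CompleteSpace X]
    (μ : Measure Ω) (p : ENNReal) (hp : 1 ≤ p) (hp' : p ≠ ⊤) (k r : ℕ) (hk : 1 ≤ k)
    (hr : r < k)
    (f : Ω → X) (hf : MemLp f p μ)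
    (g : Ω → X) (hg : g ∈ GSet μ p k)
    -- g is a minimizer for f in G_{p,k}(X)
    (hmin : eLpNorm (f - g) p μ = ⨅ h ∈ GSet (X := X) μ p k, eLpNorm (f - h) p μ)
    -- the degree of g is at most r : g agrees a.e. with a simple function with ≤ r values
    (hdeg : ∃ g' : Ω → X, g' ∈ GSet μ p r ∧ g =ᵐ[μ] g') :
    ∃ s : Ω → X, s ∈ GSet μ p r ∧ f =ᵐ[μ] s :=
  mem_Gpr_of_minimizer_low_degree_general μ p hp hp' k r hr f hf g hmin hdeg
end

section
/- Let (Ω,F,μ) be a measure space, X a Banach space, p ∈ [1,∞), k ≥ 1, and f ∈ L^p(Ω,μ;X) with f ∉ G_{p,k}(X). Then every minimizer h ∈ G_{p,k}(X) for f has degree exactly k, its reduced form h = ∑_{i=1}^k x_i 1_{A_i} satisfies A_i ⊆ f^{-1}(V_i) μ-a.e. for the Voronoi cells V_i of {x_1,...,x_k}, and each x_i is a p-th mean of f on A_i (i.e., x_i minimizes y ↦ ∫_{A_i} ‖f(ω)-y‖^p dμ). -/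
/-!
Each claim comes from comparing the minimizer `h` with the competitor that equals a constant `z`
on a measurable set `C` and `h` elsewhere. It still takes at most `k` values if `z` is a value
of `h`, if `C` is a whole cell `A i` (whose value `x i` is then freed), or if `h` has fewer than
`k` values; minimality then gives `∫_C ‖f - h‖^p ≤ ∫_C ‖f - z‖^p`. For `C = A i` this says that
`x i` is a `p`-th mean of `f` on `A i`. Hence `z` cannot be strictly closer to `f` than `h` on a
set of positive measure: with `z = x j` this is the Voronoi property, and if `m < k` and `f ≠ h`
on a set of positive measure, a countable dense subset of the (separable) range of `f` supplies
such a `z`, so `m = k`.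
-/

open MeasureTheory Set Filter Topology ENNReal

/-- Voronoi cell associated to a finite family of points. -/
def Voronoi {X : Type*} [NormedAddCommGroup X] {k : ℕ} (x : Fin k → X) (i : Fin k) : Set X :=
  {y | ∀ j, j ≠ i → ‖y - x i‖ ≤ ‖y - x j‖}

section

variable {Ω X : Type*} [MeasurableSpace Ω] [NormedAddCommGroup X] {μ : Measure Ω}
  {p : ℝ≥0∞} {k m : ℕ}

lemma eLpNorm_le_eLpNorm_iff_lintegral_le {ε : Type*} [ENorm ε] {u v : Ω → ε} (hp0 : p ≠ 0)
    (hpt : p ≠ ∞) :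
    eLpNorm u p μ ≤ eLpNorm v p μ ↔
      ∫⁻ ω, ‖u ω‖ₑ ^ p.toReal ∂μ ≤ ∫⁻ ω, ‖v ω‖ₑ ^ p.toReal ∂μ := by
  rw [eLpNorm_eq_lintegral_rpow_enorm_toReal hp0 hpt,
    eLpNorm_eq_lintegral_rpow_enorm_toReal hp0 hpt,
    ENNReal.rpow_le_rpow_iff (by simp [ENNReal.toReal_pos hp0 hpt])]

lemma MeasureTheory.MemLp.lintegral_rpow_enorm_lt_top {ε : Type*} [TopologicalSpace ε] [ENorm ε]
    {u : Ω → ε} (hu : MemLp u p μ) (hp0 : p ≠ 0) (hpt : p ≠ ∞) : ∫⁻ ω, ‖u ω‖ₑ ^ p.toReal ∂μ < ∞ :=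
  (eLpNorm_lt_top_iff_lintegral_rpow_enorm_lt_top hp0 hpt).1 hu.eLpNorm_lt_top

lemma MeasureTheory.StronglyMeasurable.measurableSet_norm_sub_lt {f : Ω → X}
    (hf : StronglyMeasurable f) (a b : X) : MeasurableSet {ω | ‖f ω - a‖ < ‖f ω - b‖} :=
  measurableSet_lt (hf.sub stronglyMeasurable_const).norm
    (hf.sub stronglyMeasurable_const).norm

lemma exists_measure_inter_norm_sub_lt_ne_zero {f : Ω → X} (hf : StronglyMeasurable f)
    {D : Set Ω} {c : X} (hne : μ (D ∩ {ω | f ω ≠ c}) ≠ 0) :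
    ∃ z : X, μ (D ∩ {ω | ‖f ω - z‖ < ‖f ω - c‖}) ≠ 0 := by
  obtain ⟨S, hS, hdense⟩ := hf.isSeparable_range
  by_contra! H
  refine hne (measure_mono_null ?_ ((measure_biUnion_null_iff hS).2 fun z _ => H z))
  rintro ω ⟨hωD, hωc⟩
  obtain ⟨z, hzS, hz⟩ := Metric.mem_closure_iff.1 (hdense ⟨ω, rfl⟩) ‖f ω - c‖
    (norm_pos_iff.2 (sub_ne_zero.2 hωc))
  exact mem_biUnion hzS ⟨hωD, by simpa [dist_eq_norm] using hz⟩

def IsBestApprox (μ : Measure Ω) (p : ℝ≥0∞) (k : ℕ) (f h : Ω → X) : Prop :=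
  h ∈ GSet μ p k ∧ ∀ g ∈ GSet μ p k, eLpNorm (f - h) p μ ≤ eLpNorm (f - g) p μ

def IsPthMean (μ : Measure Ω) (p : ℝ≥0∞) (f : Ω → X) (A : Set Ω) (z : X) : Prop :=
  ∀ y, ∫⁻ ω in A, ‖f ω - z‖ₑ ^ p.toReal ∂μ ≤ ∫⁻ ω in A, ‖f ω - y‖ₑ ^ p.toReal ∂μ

structure IsReducedForm (μ : Measure Ω) (h : Ω → X) (x : Fin m → X) (A : Fin m → Set Ω) :
    Prop where
  injective : Function.Injective x
  measurableSet : ∀ i, MeasurableSet (A i)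
  pairwiseDisjoint : Pairwise (Function.onFun Disjoint A)
  iUnion_eq_univ : (⋃ i, A i) = Set.univ
  measure_pos : ∀ i, 0 < μ (A i)
  eq_sum_indicator : h = fun ω => ∑ i, (A i).indicator (fun _ => x i) ω

namespace IsReducedForm

variable {h : Ω → X} {x : Fin m → X} {A : Fin m → Set Ω}

lemma apply_of_mem (hred : IsReducedForm μ h x A) {i : Fin m} {ω : Ω} (hω : ω ∈ A i) :
    h ω = x i := by
  rw [hred.eq_sum_indicator]
  exact (Finset.sum_eq_single_of_mem i (Finset.mem_univ i) fun j _ hji =>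
    indicator_of_notMem (fun hωj => (hred.pairwiseDisjoint hji).le_bot ⟨hωj, hω⟩) _).trans
    (indicator_of_mem hω _)

lemma exists_mem (hred : IsReducedForm μ h x A) (ω : Ω) : ∃ i, ω ∈ A i :=
  mem_iUnion.1 (hred.iUnion_eq_univ ▸ mem_univ ω)

lemma apply_mem_image [DecidableEq X] (hred : IsReducedForm μ h x A) (ω : Ω) :
    h ω ∈ Finset.univ.image x := by
  obtain ⟨i, hi⟩ := hred.exists_mem ω
  exact Finset.mem_image.2 ⟨i, Finset.mem_univ i, (hred.apply_of_mem hi).symm⟩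

lemma apply_mem_image_erase [DecidableEq X] (hred : IsReducedForm μ h x A) {i : Fin m} {ω : Ω}
    (hω : ω ∉ A i) : h ω ∈ (Finset.univ.erase i).image x := by
  obtain ⟨j, hj⟩ := hred.exists_mem ω
  exact Finset.mem_image.2 ⟨j, Finset.mem_erase.2 ⟨fun hji => hω (hji ▸ hj), Finset.mem_univ j⟩,
    (hred.apply_of_mem hj).symm⟩

lemma card_le (hred : IsReducedForm μ h x A) {s : Finset X} (hs : ∀ ω, h ω ∈ s) :
    m ≤ s.card := by
  classical
  calc m = (Finset.univ.image x).card := by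
        rw [Finset.card_image_of_injective _ hred.injective, Finset.card_univ, Fintype.card_fin]
    _ ≤ s.card := Finset.card_le_card fun v hv => by
        obtain ⟨i, -, rfl⟩ := Finset.mem_image.1 hv
        obtain ⟨ω, hω⟩ := nonempty_of_measure_ne_zero (hred.measure_pos i).ne'
        exact hred.apply_of_mem hω ▸ hs ω

end IsReducedForm

namespace IsBestApprox

variable {f h : Ω → X} {C : Set Ω} {x : Fin m → X} {A : Fin m → Set Ω}

lemma setLIntegral_le_of_update_const [DecidableEq X] (hbest : IsBestApprox μ p k f h)
    (hp0 : p ≠ 0) (hpt : p ≠ ∞) (hf : MemLp f p μ) (hC : MeasurableSet C) (z : X) {s : Finset X}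
    (hcard : (insert z s).card ≤ k) (hs : ∀ ω ∉ C, h ω ∈ s) :
    ∫⁻ ω in C, ‖f ω - h ω‖ₑ ^ p.toReal ∂μ ≤ ∫⁻ ω in C, ‖f ω - z‖ₑ ^ p.toReal ∂μ := by
  classical
  set q := p.toReal
  by_cases hz : ∫⁻ ω in C, ‖f ω - z‖ₑ ^ q ∂μ = ∞
  · exact hz ▸ le_top
  set g := C.piecewise (fun _ => z) h
  have hcost_g : ∫⁻ ω, ‖(f - g) ω‖ₑ ^ q ∂μ =
      ∫⁻ ω in C, ‖f ω - z‖ₑ ^ q ∂μ + ∫⁻ ω in Cᶜ, ‖f ω - h ω‖ₑ ^ q ∂μ := by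
    rw [← lintegral_add_compl _ hC]
    congr 1 <;> refine setLIntegral_congr_fun (by measurability) fun ω hω => ?_
    · simp [g, hω]
    · simp [g, notMem_of_mem_compl hω]
  have hcompl : ∫⁻ ω in Cᶜ, ‖f ω - h ω‖ₑ ^ q ∂μ ≠ ∞ :=
    ne_top_of_le_ne_top ((hf.sub hbest.1.1).lintegral_rpow_enorm_lt_top hp0 hpt).ne
      (setLIntegral_le_lintegral _ _)
  have hg_meas : StronglyMeasurable g := .piecewise hC stronglyMeasurable_const hbest.1.2.1
  have hg : g ∈ GSet μ p k := by
    have hfg : MemLp (f - g) p μ := ⟨hf.1.sub hg_meas.aestronglyMeasurable,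
      (eLpNorm_lt_top_iff_lintegral_rpow_enorm_lt_top hp0 hpt).2
        (hcost_g ▸ ENNReal.add_lt_top.2 ⟨lt_top_iff_ne_top.2 hz, lt_top_iff_ne_top.2 hcompl⟩)⟩
    refine ⟨by simpa using hf.sub hfg, hg_meas, insert z s, hcard, fun ω => ?_⟩
    by_cases hω : ω ∈ C
    · simp [g, hω]
    · simp [g, hω, hs ω hω]
  have hle := (eLpNorm_le_eLpNorm_iff_lintegral_le hp0 hpt).1 (hbest.2 g hg)
  rw [hcost_g, ← lintegral_add_compl _ hC] at hle
  exact (ENNReal.add_le_add_iff_right hcompl).1 hle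

lemma measure_eq_zero_of_ae_lt [DecidableEq X] (hbest : IsBestApprox μ p k f h) (hp0 : p ≠ 0)
    (hpt : p ≠ ∞) (hf : MemLp f p μ) (hC : MeasurableSet C) (z : X) {s : Finset X}
    (hcard : (insert z s).card ≤ k) (hs : ∀ ω ∉ C, h ω ∈ s)
    (hlt : ∀ᵐ ω ∂μ, ω ∈ C → ‖f ω - z‖ < ‖f ω - h ω‖) : μ C = 0 := by
  by_contra hC0
  have hlt' : ∀ᵐ ω ∂μ.restrict C, ‖f ω - z‖ₑ ^ p.toReal < ‖f ω - h ω‖ₑ ^ p.toReal := by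
    rw [ae_restrict_iff' hC]
    filter_upwards [hlt] with ω hω hωC
    exact ENNReal.rpow_lt_rpow (ENNReal.coe_lt_coe.2 (hω hωC)) (ENNReal.toReal_pos hp0 hpt)
  have hfin : ∫⁻ ω in C, ‖f ω - z‖ₑ ^ p.toReal ∂μ ≠ ∞ :=
    ne_top_of_le_ne_top ((hf.sub hbest.1.1).lintegral_rpow_enorm_lt_top hp0 hpt).ne
      ((lintegral_mono_ae (hlt'.mono fun _ => le_of_lt)).trans (setLIntegral_le_lintegral _ _))
  have hstrict := lintegral_strict_mono (by rwa [Ne, Measure.restrict_eq_zero])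
    ((hf.1.sub hbest.1.2.1.aestronglyMeasurable).enorm.pow_const _).restrict hfin hlt'
  exact lt_irrefl _
    (hstrict.trans_le (hbest.setLIntegral_le_of_update_const hp0 hpt hf hC z hcard hs))


lemma measure_diff_preimage_voronoi_eq_zero (hbest : IsBestApprox μ p k f h) (hp0 : p ≠ 0)
    (hpt : p ≠ ∞) (hf : MemLp f p μ) (hred : IsReducedForm μ h x A) (hmk : m ≤ k) (i : Fin m) :
    μ (A i \ f ⁻¹' Voronoi x i) = 0 := by
  classical
  obtain ⟨f', hf', hff'⟩ := hf.1
  have hnull : ∀ j, μ (A i ∩ {ω | ‖f' ω - x j‖ < ‖f' ω - x i‖}) = 0 := fun j => by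
    refine hbest.measure_eq_zero_of_ae_lt hp0 hpt hf
      ((hred.measurableSet i).inter (hf'.measurableSet_norm_sub_lt _ _)) (x j)
      (s := Finset.univ.image x) ?_ (fun ω _ => hred.apply_mem_image ω) ?_
    · rw [Finset.insert_eq_of_mem (Finset.mem_image_of_mem x (Finset.mem_univ j))]
      exact Finset.card_image_le.trans (by simpa using hmk)
    · filter_upwards [hff'] with ω hω hωC
      rw [hω, hred.apply_of_mem hωC.1]
      exact hωC.2
  have hvor : ∀ᵐ ω ∂μ, ω ∈ A i → f ω ∈ Voronoi x i := by
    filter_upwards [hff', ae_all_iff.2 fun j => measure_eq_zero_iff_ae_notMem.1 (hnull j)]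
      with ω hω hcloser hωA j _
    rw [hω]
    exact not_lt.1 fun hlt => hcloser j ⟨hωA, hlt⟩
  exact measure_mono_null (fun ω hω (himp : ω ∈ A i → f ω ∈ Voronoi x i) => hω.2 (himp hω.1))
    (ae_iff.1 hvor)

lemma isPthMean (hbest : IsBestApprox μ p k f h) (hp0 : p ≠ 0) (hpt : p ≠ ∞) (hf : MemLp f p μ)
    (hred : IsReducedForm μ h x A) (hmk : m ≤ k) (i : Fin m) : IsPthMean μ p f (A i) (x i) := by
  intro y
  classical
  have hcard : (insert y ((Finset.univ.erase i).image x)).card ≤ k :=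
    calc _ ≤ ((Finset.univ.erase i).image x).card + 1 := Finset.card_insert_le _ _
      _ ≤ (Finset.univ.erase i).card + 1 := by gcongr; exact Finset.card_image_le
      _ = m := by
        rw [Finset.card_erase_of_mem (Finset.mem_univ i), Finset.card_univ, Fintype.card_fin]
        have := i.pos
        omega
      _ ≤ k := hmk
  calc ∫⁻ ω in A i, ‖f ω - x i‖ₑ ^ p.toReal ∂μ = ∫⁻ ω in A i, ‖f ω - h ω‖ₑ ^ p.toReal ∂μ :=
        setLIntegral_congr_fun (hred.measurableSet i) fun ω hω => by rw [hred.apply_of_mem hω]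
    _ ≤ _ := hbest.setLIntegral_le_of_update_const hp0 hpt hf (hred.measurableSet i) y hcard
        fun ω hω => hred.apply_mem_image_erase hω

lemma le_of_not_ae_eq (hbest : IsBestApprox μ p k f h) (hp0 : p ≠ 0) (hpt : p ≠ ∞)
    (hf : MemLp f p μ) (hred : IsReducedForm μ h x A) (hne : ¬ f =ᵐ[μ] h) : k ≤ m := by
  classical
  by_contra! hmk
  obtain ⟨f', hf', hff'⟩ := hf.1
  obtain ⟨i, hi⟩ : ∃ i, μ (A i ∩ {ω | f' ω ≠ x i}) ≠ 0 := by
    by_contra! H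
    refine hne (hff'.trans ?_)
    filter_upwards [ae_all_iff.2 fun i => measure_eq_zero_iff_ae_notMem.1 (H i)] with ω hω
    obtain ⟨i, hωi⟩ := hred.exists_mem ω
    rw [hred.apply_of_mem hωi]
    exact not_not.1 fun hne => hω i ⟨hωi, hne⟩
  obtain ⟨z, hz⟩ := exists_measure_inter_norm_sub_lt_ne_zero hf' hi
  refine hz (hbest.measure_eq_zero_of_ae_lt hp0 hpt hf
    ((hred.measurableSet i).inter (hf'.measurableSet_norm_sub_lt _ _)) z
    (s := Finset.univ.image x) ?_ (fun ω _ => hred.apply_mem_image ω) ?_)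
  · calc _ ≤ (Finset.univ.image x).card + 1 := Finset.card_insert_le _ _
      _ ≤ m + 1 := by simpa using Finset.card_image_le (s := Finset.univ) (f := x)
      _ ≤ k := hmk
  · filter_upwards [hff'] with ω hω hωC
    rw [hω, hred.apply_of_mem hωC.1]
    exact hωC.2

end IsBestApprox

end

theorem minimizer_special_voronoi_form_general
    {Ω X : Type*} [MeasurableSpace Ω] [NormedAddCommGroup X]
    (μ : Measure Ω) (p : ENNReal) (hp : 1 ≤ p) (hp' : p ≠ ⊤) (k : ℕ)
    (f : Ω → X) (hf : MemLp f p μ)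
    -- f is not (a.e. equal to) an element of G_{p,k}(X)
    (hfnot : ¬ ∃ s ∈ GSet (X := X) μ p k, f =ᵐ[μ] s)
    (h : Ω → X) (hh : h ∈ GSet μ p k)
    -- h is a minimizer for f in G_{p,k}(X)
    (hmin : eLpNorm (f - h) p μ = ⨅ g ∈ GSet (X := X) μ p k, eLpNorm (f - g) p μ)
    -- reduced form of h
    (m : ℕ) (x : Fin m → X) (hx : Function.Injective x)
    (A : Fin m → Set Ω) (hAmeas : ∀ i, MeasurableSet (A i))
    (hAdisj : Pairwise (Function.onFun Disjoint A)) (hAcov : (⋃ i, A i) = Set.univ)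
    (hApos : ∀ i, 0 < μ (A i))
    (hform : h = fun ω => ∑ i, (A i).indicator (fun _ => x i) ω) :
    -- h has degree exactly k, is in f-Voronoi form, and each xᵢ is a p-th mean on Aᵢ
    m = k ∧
    (∀ i, μ (A i \ f ⁻¹' Voronoi x i) = 0) ∧
    (∀ i, ∀ y : X,
      (∫⁻ ω in A i, (‖f ω - x i‖₊ : ℝ≥0∞) ^ p.toReal ∂μ) ≤
        ∫⁻ ω in A i, (‖f ω - y‖₊ : ℝ≥0∞) ^ p.toReal ∂μ) := by
  have hp0 : p ≠ 0 := (zero_lt_one.trans_le hp).ne'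
  have hbest : IsBestApprox μ p k f h := ⟨hh, fun g hg => hmin ▸ iInf₂_le g hg⟩
  have hred : IsReducedForm μ h x A := ⟨hx, hAmeas, hAdisj, hAcov, hApos, hform⟩
  obtain ⟨s, hsk, hhs⟩ := hh.2.2
  have hmk : m ≤ k := (hred.card_le hhs).trans hsk
  exact ⟨hmk.antisymm (hbest.le_of_not_ae_eq hp0 hp' hf hred fun hfh => hfnot ⟨h, hh, hfh⟩),
    hbest.measure_diff_preimage_voronoi_eq_zero hp0 hp' hf hred hmk,
    fun i => hbest.isPthMean hp0 hp' hf hred hmk i⟩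

theorem minimizer_special_voronoi_form
    {Ω X : Type*} [MeasurableSpace Ω] [NormedAddCommGroup X] [NormedSpace ℝ X]
    [CompleteSpace X]
    (μ : Measure Ω) (p : ENNReal) (hp : 1 ≤ p) (hp' : p ≠ ⊤) (k : ℕ) (hk : 1 ≤ k)
    (f : Ω → X) (hf : MemLp f p μ)
    -- f is not (a.e. equal to) an element of G_{p,k}(X)
    (hfnot : ¬ ∃ s ∈ GSet (X := X) μ p k, f =ᵐ[μ] s)
    (h : Ω → X) (hh : h ∈ GSet μ p k)
    -- h is a minimizer for f in G_{p,k}(X)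
    (hmin : eLpNorm (f - h) p μ = ⨅ g ∈ GSet (X := X) μ p k, eLpNorm (f - g) p μ)
    -- reduced form of h
    (m : ℕ) (x : Fin m → X) (hx : Function.Injective x)
    (A : Fin m → Set Ω) (hAmeas : ∀ i, MeasurableSet (A i))
    (hAdisj : Pairwise (Function.onFun Disjoint A)) (hAcov : (⋃ i, A i) = Set.univ)
    (hApos : ∀ i, 0 < μ (A i))
    (hform : h = fun ω => ∑ i, (A i).indicator (fun _ => x i) ω) :
    -- h has degree exactly k, is in f-Voronoi form, and each xᵢ is a p-th mean on Aᵢ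
    m = k ∧
    (∀ i, μ (A i \ f ⁻¹' Voronoi x i) = 0) ∧
    (∀ i, ∀ y : X,
      (∫⁻ ω in A i, (‖f ω - x i‖₊ : ℝ≥0∞) ^ p.toReal ∂μ) ≤
        ∫⁻ ω in A i, (‖f ω - y‖₊ : ℝ≥0∞) ^ p.toReal ∂μ) :=
  minimizer_special_voronoi_form_general μ p hp hp' k f hf hfnot h hh hmin m x hx A hAmeas hAdisj
    hAcov hApos hform
end
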